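/- arXiv:1106.2348 — 9 statements merged into one kernel-verified Lean document; each statement's English description precedes it below -/
import Mathlib

section
/- Let H = P_n^c be the antipath on n vertices and let k ≥ 1. Then the k-th power of its edge ideal is given by I(H)^k = ( x_{i_1} x_{i_2} ⋯ x_{i_k} · x_{j_1} x_{j_2} ⋯ x_{j_k} : i_1 ≤ i_2 ≤ ⋯ ≤ i_k ≤ j_1 ≤ j_2 ≤ ⋯ ≤ j_k and i_r + 2 ≤ j_r for all 1 ≤ r ≤ k ), i.e., I(H)^k equals the ideal generated by all monomials of degree 2k of this form. -/
/-!
Any product of `k` edges `x_{i_r} x_{j_r}` is, up to commuting factors, a sorted one: sort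
the `2k` endpoints as `a_0 ≤ ⋯ ≤ a_{2k-1}` and pair `a_r` with `a_{k+r}`. The new pairs still
satisfy `a_r + 2 ≤ a_{k+r}`: otherwise the `k + 1` values `a_r, …, a_{k+r}` would lie in an
interval of width at most one, which contains at most one endpoint of each of the `k`
original edges.
-/

open MvPolynomial

/-- The edge ideal of the antipath `P_n^c`: the simple graph on vertices `{1,…,n}`
(realized as `Fin n`) whose edges are the pairs `{i,j}` with `i + 2 ≤ j`. -/
noncomputable def antipathIdeal (K : Type*) [Field K] (n : ℕ) :
    Ideal (MvPolynomial (Fin n) K) :=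
  Ideal.span { m | ∃ i j : Fin n, (i : ℕ) + 2 ≤ (j : ℕ) ∧ m = X i * X j }

open Finset

section SortedPairs

variable {α : Type*} [LinearOrder α] {k : ℕ}

def sortedAppend (i j : Fin k → α) : Fin (k + k) → α :=
  Fin.append i j ∘ Tuple.sort (Fin.append i j)

def sortedFst (i j : Fin k → α) (r : Fin k) : α :=
  sortedAppend i j (Fin.castAdd k r)

def sortedSnd (i j : Fin k → α) (r : Fin k) : α :=
  sortedAppend i j (Fin.natAdd k r)

variable (i j : Fin k → α)

theorem monotone_sortedAppend : Monotone (sortedAppend i j) :=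
  Tuple.monotone_sort _

theorem monotone_sortedFst : Monotone (sortedFst i j) := fun _ _ hab =>
  monotone_sortedAppend i j (show Fin.castAdd k _ ≤ Fin.castAdd k _ from hab)

theorem monotone_sortedSnd : Monotone (sortedSnd i j) := fun _ _ hab =>
  monotone_sortedAppend i j ((Fin.natAdd_le_natAdd_iff k).2 hab)

theorem sortedFst_le_sortedSnd (r s : Fin k) : sortedFst i j r ≤ sortedSnd i j s :=
  monotone_sortedAppend i j (by simp only [Fin.le_def, Fin.val_castAdd, Fin.val_natAdd]; omega)

theorem prod_sortedFst_mul_prod_sortedSnd {M : Type*} [CommMonoid M] (f : α → M) :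
    (∏ r, f (sortedFst i j r)) * ∏ r, f (sortedSnd i j r) =
      (∏ r, f (i r)) * ∏ r, f (j r) :=
  calc (∏ r, f (sortedFst i j r)) * ∏ r, f (sortedSnd i j r)
      = ∏ u, f (sortedAppend i j u) := (Fin.prod_univ_add fun u => f (sortedAppend i j u)).symm
    _ = ∏ p, f (Fin.append i j p) := Equiv.prod_comp (Tuple.sort _) (f ∘ Fin.append i j)
    _ = (∏ r, f (i r)) * ∏ r, f (j r) := by
      simp only [Fin.prod_univ_add, Fin.append_left, Fin.append_right]

theorem card_filter_sortedAppend (P : α → Prop) [DecidablePred P] :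
    #{u | P (sortedAppend i j u)} = #{t | P (i t)} + #{t | P (j t)} :=
  calc #{u | P (sortedAppend i j u)}
      = ∑ u, if P (Fin.append i j (Tuple.sort (Fin.append i j) u)) then 1 else 0 := card_filter _ _
    _ = ∑ p, if P (Fin.append i j p) then 1 else 0 :=
      Equiv.sum_comp (Tuple.sort _) fun p => if P (Fin.append i j p) then 1 else 0
    _ = #{t | P (i t)} + #{t | P (j t)} := by
      simp only [card_filter, Fin.sum_univ_add, Fin.append_left, Fin.append_right]

theorem rel_sortedFst_sortedSnd {R : α → α → Prop}
    (hR : ∀ ⦃a b a' b'⦄, R a b → a' ≤ a → b ≤ b' → R a' b') (hij : ∀ t, R (i t) (j t))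
    (r : Fin k) : R (sortedFst i j r) (sortedSnd i j r) := by
  classical
  by_contra hr
  let W : α → Prop := fun x => sortedFst i j r ≤ x ∧ x ≤ sortedSnd i j r
  have hdisj : Disjoint (univ.filter fun t => W (i t)) (univ.filter fun t => W (j t)) :=
    disjoint_filter.2 fun t _ hit hjt => hr (hR (hij t) hit.1 hjt.2)
  have hupper : #{u | W (sortedAppend i j u)} ≤ k := by
    rw [card_filter_sortedAppend i j W, ← card_union_of_disjoint hdisj]
    exact (card_le_univ _).trans_eq (Fintype.card_fin k)
  have hlower : k + 1 ≤ #{u | W (sortedAppend i j u)} :=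
    calc k + 1 = #(Icc (Fin.castAdd k r) (Fin.natAdd k r)) := by
          simp only [Fin.card_Icc, Fin.val_castAdd, Fin.val_natAdd]; omega
      _ ≤ #{u | W (sortedAppend i j u)} := card_le_card fun u hu => by
          rw [mem_Icc] at hu
          exact mem_filter.2 ⟨mem_univ u,
            monotone_sortedAppend i j hu.1, monotone_sortedAppend i j hu.2⟩
  omega

end SortedPairs

theorem antipath_power_eq_span_general (K : Type*) [Field K] (n k : ℕ) :
    antipathIdeal K n ^ k =
      Ideal.span { m : MvPolynomial (Fin n) K | ∃ i j : Fin k → Fin n,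
        Monotone i ∧ Monotone j ∧ (∀ r s : Fin k, i r ≤ j s) ∧
        (∀ r : Fin k, (i r : ℕ) + 2 ≤ (j r : ℕ)) ∧
        m = (∏ r, X (i r)) * ∏ r, X (j r) } := by
  rw [antipathIdeal, Ideal.span, Submodule.span_pow]
  congr 1
  ext m
  rw [Set.mem_pow]
  constructor
  · rintro ⟨f, rfl⟩
    choose i j hij hf using fun r => (f r).2
    have hgap : ∀ r, ((sortedFst i j r : Fin n) : ℕ) + 2 ≤ sortedSnd i j r :=
      rel_sortedFst_sortedSnd (R := fun a b : Fin n => (a : ℕ) + 2 ≤ b) i j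
        (fun _ _ _ _ h ha hb => by simp only [Fin.le_def] at ha hb; omega) hij
    refine ⟨sortedFst i j, sortedSnd i j, monotone_sortedFst i j, monotone_sortedSnd i j,
      sortedFst_le_sortedSnd i j, hgap, ?_⟩
    rw [prod_sortedFst_mul_prod_sortedSnd, List.prod_ofFn, ← prod_mul_distrib]
    exact prod_congr rfl fun r _ => hf r
  · rintro ⟨i, j, -, -, -, hij, rfl⟩
    exact ⟨fun r => ⟨X (i r) * X (j r), i r, j r, hij r, rfl⟩, by
      rw [List.prod_ofFn, prod_mul_distrib]⟩

/-- For `k ≥ 1`, the `k`-th power of the edge ideal of the antipath is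
generated by the monomials `x_{i_1} ⋯ x_{i_k} x_{j_1} ⋯ x_{j_k}` with
`i_1 ≤ ⋯ ≤ i_k ≤ j_1 ≤ ⋯ ≤ j_k` and `i_r + 2 ≤ j_r` for all `r`. -/
theorem antipath_power_eq_span (K : Type*) [Field K] (n k : ℕ) (hk : 1 ≤ k) :
    antipathIdeal K n ^ k =
      Ideal.span { m : MvPolynomial (Fin n) K | ∃ i j : Fin k → Fin n,
        Monotone i ∧ Monotone j ∧ (∀ r s : Fin k, i r ≤ j s) ∧
        (∀ r : Fin k, (i r : ℕ) + 2 ≤ (j r : ℕ)) ∧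
        m = (∏ r, X (i r)) * ∏ r, X (j r) } :=
  antipath_power_eq_span_general K n k
end

section
/- Let G be a finite simple graph on vertex set {1,…,n} and suppose the monomial m ∈ k[x_1,…,x_n] is a product of k edges of G, i.e. m = ∏_{r=1}^k x_{u_r} x_{v_r} where each {u_r, v_r} is an edge of G. Then every monomial of degree k + 1 that divides m is divisible by x_u x_v for some edge {u,v} of G. -/
open MvPolynomial

/-! Writing `m = x^D` with `D = ∑ᵣ (e_{uᵣ} + e_{vᵣ})`, a divisor `x^d` of `m` has `d ≤ D`.
If no edge `{uᵣ, vᵣ}` lies in the support `S` of `d`, every edge contributes at most `1` to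
`∑_{i ∈ S} D i`, so `k + 1 = ∑_{i ∈ S} d i ≤ ∑_{i ∈ S} D i ≤ k`, which is absurd. -/

section

variable {σ ι : Type*}

theorem Finsupp.sum_single_add_single_le_one [DecidableEq σ] {S : Finset σ} {a b : σ}
    (h : ¬(a ∈ S ∧ b ∈ S)) :
    ∑ i ∈ S, (Finsupp.single a 1 + Finsupp.single b 1 : σ →₀ ℕ) i ≤ 1 := by
  simp only [Finsupp.add_apply, Finsupp.single_apply, Finset.sum_add_distrib,
    Finset.sum_ite_eq]
  split_ifs <;> simp_all

theorem Finsupp.exists_mem_support_of_le_sum_single_add_single (s : Finset ι) (u v : ι → σ)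
    (d : σ →₀ ℕ) (hle : d ≤ ∑ r ∈ s, (Finsupp.single (u r) 1 + Finsupp.single (v r) 1))
    (hdeg : s.card < d.degree) :
    ∃ r ∈ s, u r ∈ d.support ∧ v r ∈ d.support := by
  classical
  by_contra! hnone
  have : d.degree ≤ s.card :=
    calc d.degree = ∑ i ∈ d.support, d i := Finsupp.degree_apply d
      _ ≤ ∑ i ∈ d.support, ∑ r ∈ s,
            (Finsupp.single (u r) 1 + Finsupp.single (v r) 1 : σ →₀ ℕ) i :=
        Finset.sum_le_sum fun i _ => by simpa only [Finsupp.finsetSum_apply] using hle i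
      _ = ∑ r ∈ s, ∑ i ∈ d.support,
            (Finsupp.single (u r) 1 + Finsupp.single (v r) 1 : σ →₀ ℕ) i :=
        Finset.sum_comm
      _ ≤ ∑ _r ∈ s, 1 := Finset.sum_le_sum fun r hr =>
        Finsupp.sum_single_add_single_le_one fun ⟨hu, hv⟩ => hnone r hr hu hv
      _ = s.card := by simp
  omega

variable {R : Type*} [CommSemiring R]

theorem MvPolynomial.X_mul_X_eq_monomial (a b : σ) :
    (X a * X b : MvPolynomial σ R) = monomial (Finsupp.single a 1 + Finsupp.single b 1) 1 := by
  rw [X, X, monomial_mul, one_mul]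

theorem MvPolynomial.prod_X_mul_X_eq_monomial (s : Finset ι) (u v : ι → σ) :
    ∏ r ∈ s, (X (u r) * X (v r) : MvPolynomial σ R) =
      monomial (∑ r ∈ s, (Finsupp.single (u r) 1 + Finsupp.single (v r) 1)) 1 := by
  simp only [X_mul_X_eq_monomial, monomial_sum_one]

theorem MvPolynomial.X_mul_X_dvd_monomial {a b : σ} (hab : a ≠ b) {d : σ →₀ ℕ}
    (ha : a ∈ d.support) (hb : b ∈ d.support) (c : R) :
    (X a * X b : MvPolynomial σ R) ∣ monomial d c := by
  classical
  rw [X_mul_X_eq_monomial, monomial_dvd_monomial]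
  refine ⟨Or.inr fun i => ?_, one_dvd c⟩
  rw [Finsupp.mem_support_iff] at ha hb
  simp only [Finsupp.add_apply, Finsupp.single_apply]
  split_ifs <;> subst_vars <;> first | exact absurd rfl hab | omega

end

/-- If a monomial `m` is a product of `k` edges of a finite simple graph `G`
(on vertex set `Fin n`), then every monomial of degree `k + 1` dividing `m` is divisible by
`x_u x_v` for some edge `{u,v}` of `G`. -/
theorem edge_in_degree_succ_divisor (K : Type*) [Field K] (n k : ℕ)
    (G : SimpleGraph (Fin n)) (u v : Fin k → Fin n)
    (huv : ∀ r : Fin k, G.Adj (u r) (v r))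
    (d : Fin n →₀ ℕ) (hd : (d.sum fun _ e => e) = k + 1)
    (hdvd : (monomial d (1 : K)) ∣ ∏ r, (X (u r) * X (v r))) :
    ∃ a b : Fin n, G.Adj a b ∧
      (X a * X b : MvPolynomial (Fin n) K) ∣ monomial d (1 : K) := by
  rw [prod_X_mul_X_eq_monomial, monomial_dvd_monomial] at hdvd
  have hdeg : (Finset.univ : Finset (Fin k)).card < d.degree := by
    rw [Finset.card_univ, Fintype.card_fin, show d.degree = k + 1 from hd]
    exact k.lt_succ_self
  obtain ⟨r, -, hu, hv⟩ := Finsupp.exists_mem_support_of_le_sum_single_add_single _ u v d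
    (hdvd.1.resolve_left one_ne_zero) hdeg
  exact ⟨u r, v r, huv r, X_mul_X_dvd_monomial (huv r).ne hu hv 1⟩
end

section
/- For every n ≥ 1 and every k ≥ 1, the power I(P_n^c)^k of the edge ideal of the antipath has linear quotients; more precisely, listing the minimal monomial generators of I(P_n^c)^k in decreasing lexicographic order (for the variable order x_1 > x_2 > ⋯ > x_n) gives a linear quotients ordering. -/
open MvPolynomial

/-- `d` is (the exponent vector of) a minimal monomial generator of the monomial ideal `I`:
the monomial `x^d` lies in `I` and no proper monomial divisor of it lies in `I`. -/
def IsMinGen {K : Type*} [Field K] {σ : Type*} (I : Ideal (MvPolynomial σ K))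
    (d : σ →₀ ℕ) : Prop :=
  monomial d (1 : K) ∈ I ∧ ∀ d' : σ →₀ ℕ, d' ≤ d → monomial d' (1 : K) ∈ I → d' = d

/-! The minimal generators of `I(P_n^c)^k` are the monomials `x^v` with `v` a sum of `k` edge
vectors; these are exactly the `v` of degree `2k` all of whose windows `v_c + v_{c+1}` are at most
`k`. If `x^u` comes before `x^v` in lex order and `j` is the first index with `v_j < u_j`, move one
unit of `v` down to `j` from a later position, from `j + 1` if `v` is nonzero there: all windows
stay at most `k`, so this gives a generator `x^w` that comes before `x^v` and divides `x_j x^v`.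
For monomial ideals such an exchange is exactly what makes the colon ideal generated by variables.
-/

open scoped Pointwise
open Finsupp

theorem Finsupp.degree_lt_degree {σ : Type*} {v u : σ →₀ ℕ} (hle : v ≤ u) (hne : v ≠ u) :
    v.degree < u.degree := by
  rw [← add_tsub_cancel_of_le hle, map_add, lt_add_iff_pos_right, pos_iff_ne_zero, Ne,
    degree_eq_zero_iff, tsub_eq_zero_iff_le]
  exact fun h => hne (le_antisymm hle h)

theorem Finsupp.isAntichain_of_degree_eq {σ : Type*} {A : Set (σ →₀ ℕ)} {m : ℕ}
    (hA : ∀ a ∈ A, a.degree = m) : IsAntichain (· ≤ ·) A :=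
  fun _ ha _ hb hne hle => (degree_lt_degree hle hne).ne ((hA _ ha).trans (hA _ hb).symm)

theorem Finsupp.exists_monotone_sum_single {α : Type*} [LinearOrder α] {v : α →₀ ℕ} {m : ℕ}
    (hv : v.degree = m) : ∃ f : Fin m → α, Monotone f ∧ ∑ p, single (f p) 1 = v := by
  classical
  set l := v.toMultiset.sort (· ≤ ·)
  have hl : l.length = m := by
    rw [Multiset.length_sort, card_toMultiset, ← hv, degree_apply, Finsupp.sum]
    rfl
  subst hl
  refine ⟨l.get, (Multiset.pairwise_sort _ _).sortedLE.monotone_get, ?_⟩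
  apply (orderIsoMultiset (ι := α)).injective
  rw [coe_orderIsoMultiset, map_sum]
  simp only [toMultiset_single, one_nsmul]
  rw [← List.sum_ofFn, List.ofFn_comp' l.get singleton, List.ofFn_get, ← Multiset.sum_coe,
    ← Multiset.map_coe, Multiset.sum_map_singleton, Multiset.sort_eq]

theorem List.mem_take_iff_lt_of_pairwise {α β : Type*} [Preorder β] (f : α → β) {L : List α}
    (hL : L.Pairwise fun a b => f b < f a) {t : ℕ} (ht : t < L.length) {a : α} :
    a ∈ L.take t ↔ a ∈ L ∧ f L[t] < f a := by
  have hlt := List.pairwise_iff_getElem.mp hL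
  constructor
  · intro ha
    obtain ⟨s, hs, rfl⟩ := List.mem_take_iff_getElem.mp ha
    exact ⟨List.mem_of_mem_take ha, hlt s t (by omega) ht (by omega)⟩
  · rintro ⟨ha, hlta⟩
    obtain ⟨s, hs, rfl⟩ := List.mem_iff_getElem.mp ha
    rcases lt_trichotomy s t with hst | rfl | hst
    · exact List.mem_take_iff_getElem.mpr ⟨s, by omega, rfl⟩
    · exact absurd hlta (lt_irrefl _)
    · exact absurd hlta (hlt t s ht hs hst).not_gt

namespace MvPolynomial

variable {σ R : Type*} [CommSemiring R]

theorem monomial_mem_span_monomial_image_iff [Nontrivial R] {A : Set (σ →₀ ℕ)} {d : σ →₀ ℕ} :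
    monomial d (1 : R) ∈ Ideal.span ((fun a => monomial a (1 : R)) '' A) ↔ ∃ a ∈ A, a ≤ d := by
  classical
  simp [mem_ideal_span_monomial_image, support_monomial]

theorem isMinGen_span_monomial_image_iff {K : Type*} [Field K] {A : Set (σ →₀ ℕ)}
    (hA : IsAntichain (· ≤ ·) A) {d : σ →₀ ℕ} :
    IsMinGen (Ideal.span ((fun a => monomial a (1 : K)) '' A)) d ↔ d ∈ A := by
  simp only [IsMinGen, monomial_mem_span_monomial_image_iff]
  constructor
  · rintro ⟨⟨a, ha, had⟩, hmin⟩
    exact hmin a had ⟨a, ha, le_rfl⟩ ▸ ha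
  · intro hd
    refine ⟨⟨d, hd, le_rfl⟩, fun d' hd'd ⟨a, ha, had'⟩ => le_antisymm hd'd ?_⟩
    rwa [hA.eq ha hd (had'.trans hd'd)] at had'

theorem span_monomial_image_pow (A : Set (σ →₀ ℕ)) (k : ℕ) :
    Ideal.span ((fun a => monomial a (1 : R)) '' A) ^ k =
      Ideal.span ((fun a => monomial a (1 : R)) '' (k • A)) := by
  induction k with
  | zero => simp
  | succ k ih =>
    rw [pow_succ, ih, Ideal.span_mul_span', succ_nsmul]
    congr 1
    ext p
    simp only [Set.mem_mul, Set.mem_add, Set.mem_image]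
    constructor
    · rintro ⟨_, ⟨b, hb, rfl⟩, _, ⟨a, ha, rfl⟩, rfl⟩
      exact ⟨b + a, ⟨b, hb, a, ha, rfl⟩, by rw [monomial_mul, one_mul]⟩
    · rintro ⟨_, ⟨b, hb, a, ha, rfl⟩, rfl⟩
      exact ⟨_, ⟨b, hb, rfl⟩, _, ⟨a, ha, rfl⟩, by rw [monomial_mul, one_mul]⟩

theorem colon_span_monomial_image_eq_span_X {A : Set (σ →₀ ℕ)} {m : σ →₀ ℕ}
    (h : ∀ d ∈ A, ∃ j, m j < d j ∧ ∃ w ∈ A, w ≤ m + single j 1) :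
    (Ideal.span ((fun a => monomial a (1 : R)) '' A)).colon (Ideal.span {monomial m (1 : R)}) =
      Ideal.span (X '' {j | ∃ w ∈ A, w ≤ m + single j 1}) := by
  classical
  apply le_antisymm
  · intro f hf
    rw [Ideal.mem_colon_span_singleton, mem_ideal_span_monomial_image] at hf
    rw [mem_ideal_span_X_image]
    intro e he
    obtain ⟨d, hd, hde⟩ := hf (e + m) (by
      rw [mem_support_iff, coeff_mul_monomial, mul_one]
      exact mem_support_iff.mp he)
    obtain ⟨j, hj, hw⟩ := h d hd
    have hdej : d j ≤ e j + m j := hde j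
    exact ⟨j, hw, by omega⟩
  · rw [Ideal.span_le]
    rintro _ ⟨j, ⟨w, hw, hwm⟩, rfl⟩
    rw [SetLike.mem_coe, Ideal.mem_colon_span_singleton, X, monomial_mul, one_mul,
      mem_ideal_span_monomial_image]
    intro e he
    obtain rfl := Finset.mem_singleton.mp (support_monomial_subset he)
    exact ⟨w, hw, add_comm m (single j 1) ▸ hwm⟩

end MvPolynomial

namespace Antipath

variable {n : ℕ}

def edges (n : ℕ) : Set (Fin n →₀ ℕ) :=
  {d | ∃ i j : Fin n, (i : ℕ) + 2 ≤ j ∧ d = single i 1 + single j 1}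

/-- The exponent of the variable with index `c`, read as `0` when `c ≥ n`. -/
noncomputable def expAt (c : ℕ) : (Fin n →₀ ℕ) →+ ℕ :=
  if h : c < n then applyAddHom ⟨c, h⟩ else 0

theorem expAt_val (i : Fin n) (v : Fin n →₀ ℕ) : expAt i v = v i := by
  simp [expAt]

theorem expAt_of_le {c : ℕ} (hc : n ≤ c) (v : Fin n →₀ ℕ) : expAt c v = 0 := by
  simp [expAt, not_lt.mpr hc]

theorem expAt_single (c : ℕ) (i : Fin n) :
    expAt c (single i 1) = if (i : ℕ) = c then 1 else 0 := by
  have hi := i.isLt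
  unfold expAt
  split_ifs <;> simp_all [Fin.ext_iff, eq_comm]

theorem expAt_mono (c : ℕ) {v w : Fin n →₀ ℕ} (h : v ≤ w) : expAt c v ≤ expAt c w := by
  unfold expAt
  split_ifs <;> simp [h _]

theorem degree_of_mem_edges {e : Fin n →₀ ℕ} (he : e ∈ edges n) : e.degree = 2 := by
  obtain ⟨i, j, -, rfl⟩ := he
  simp

theorem window_le_of_mem_edges {e : Fin n →₀ ℕ} (he : e ∈ edges n) (c : ℕ) :
    expAt c e + expAt (c + 1) e ≤ 1 := by
  obtain ⟨i, j, hij, rfl⟩ := he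
  simp only [map_add, expAt_single]
  split_ifs <;> omega

theorem degree_window_of_mem_nsmul {k : ℕ} {v : Fin n →₀ ℕ} (hv : v ∈ k • edges n) :
    v.degree = 2 * k ∧ ∀ c, expAt c v + expAt (c + 1) v ≤ k := by
  induction k generalizing v with
  | zero =>
    obtain rfl : v = 0 := by simpa using hv
    simp
  | succ k ih =>
    obtain ⟨a, ha, e, he, rfl⟩ := Set.mem_add.mp (succ_nsmul (edges n) k ▸ hv)
    refine ⟨by rw [map_add, (ih ha).1, degree_of_mem_edges he]; ring, fun c => ?_⟩
    have hac := (ih ha).2 c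
    have hec := window_le_of_mem_edges he c
    simp only [map_add]
    omega

/-- Sort the `2k` variables of `x^v` and pair the `i`-th with the `(i+k)`-th: if these two were
equal or adjacent, the `k + 1` variables between them would overload one window. -/
theorem mem_nsmul_of_degree_window {k : ℕ} {v : Fin n →₀ ℕ} (hdeg : v.degree = 2 * k)
    (hwin : ∀ c, expAt c v + expAt (c + 1) v ≤ k) : v ∈ k • edges n := by
  obtain ⟨f, hmono, rfl⟩ := exists_monotone_sum_single (hdeg.trans (two_mul k))
  have hgap (i : Fin k) : (f (Fin.castAdd k i) : ℕ) + 2 ≤ f (Fin.natAdd k i) := by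
    by_contra! hclose
    set c : ℕ := (f (Fin.castAdd k i) : ℕ)
    set P := Finset.Icc (Fin.castAdd k i) (Fin.natAdd k i)
    have hpair : ∀ p ∈ P, expAt c (single (f p) 1) + expAt (c + 1) (single (f p) 1) = 1 := by
      intro p hp
      have hcp : c ≤ f p := hmono (Finset.mem_Icc.mp hp).1
      have hpk : (f p : ℕ) ≤ f (Fin.natAdd k i) := hmono (Finset.mem_Icc.mp hp).2
      simp only [expAt_single]
      split_ifs <;> omega
    have hcount : k + 1 ≤ k := calc
      k + 1 = ∑ p ∈ P, (expAt c (single (f p) 1) + expAt (c + 1) (single (f p) 1)) := by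
        rw [Finset.sum_congr rfl hpair, Finset.sum_const, Fin.card_Icc]
        simp only [Fin.natAdd, Fin.castAdd, smul_eq_mul, mul_one, Fin.val_castLE]
        omega
      _ = expAt c (∑ p ∈ P, single (f p) 1) + expAt (c + 1) (∑ p ∈ P, single (f p) 1) := by
        rw [map_sum, map_sum, Finset.sum_add_distrib]
      _ ≤ expAt c (∑ p, single (f p) 1) + expAt (c + 1) (∑ p, single (f p) 1) := by
        gcongr <;> exact expAt_mono _ (Finset.sum_le_sum_of_subset (Finset.subset_univ _))
      _ ≤ k := hwin c
    omega
  have hnsmul : k • edges n = ∑ _i : Fin k, edges n := by simp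
  rw [Fin.sum_univ_add, ← Finset.sum_add_distrib, hnsmul]
  exact Set.finsetSum_mem_finsetSum _ _ _ fun i _ => ⟨_, _, hgap i, rfl⟩

theorem mem_nsmul_edges_iff {k : ℕ} {v : Fin n →₀ ℕ} :
    v ∈ k • edges n ↔ v.degree = 2 * k ∧ ∀ c, expAt c v + expAt (c + 1) v ≤ k :=
  ⟨degree_window_of_mem_nsmul, fun h => mem_nsmul_of_degree_window h.1 h.2⟩

/-- Here `w` is `v` with one unit moved from `l` down to `j`. -/
theorem window_le_of_shift {k j l : ℕ} {u v w : ℕ → ℕ}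
    (hu : ∀ c, u c + u (c + 1) ≤ k) (hv : ∀ c, v c + v (c + 1) ≤ k)
    (hagree : ∀ c < j, v c = u c) (hj : v j < u j) (hjl : j < l) (hl : l = j + 1 ∨ v (j + 1) = 0)
    (hw : ∀ c, w c + (if l = c then 1 else 0) = v c + (if j = c then 1 else 0)) (c : ℕ) :
    w c + w (c + 1) ≤ k := by
  have hc := hw c
  have hc' := hw (c + 1)
  rcases lt_trichotomy (c + 1) j with hcj | rfl | hcj
  · have := hv c
    split_ifs at hc hc' <;> omega
  · have := hu c
    have := hagree c (by omega)
    split_ifs at hc hc' <;> omega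
  · rcases (show c = j ∨ j < c by omega) with rfl | hcj
    · have := hu c
      have := hv c
      split_ifs at hc hc' <;> omega
    · have := hv c
      split_ifs at hc hc' <;> omega

theorem exists_shift_source {u v : Fin n →₀ ℕ} (hdeg : v.degree = u.degree) {j : Fin n}
    (hagree : ∀ i < j, v i = u i) (hj : v j < u j) :
    ∃ l, j < l ∧ 0 < v l ∧ ((l : ℕ) = j + 1 ∨ expAt (j + 1) v = 0) := by
  by_cases hnext : expAt (j + 1) v = 0
  · obtain ⟨l, hjl, hvl⟩ : ∃ l, j < l ∧ 0 < v l := by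
      by_contra! hzero
      have hle : v ≤ u := fun i => by
        rcases lt_trichotomy i j with h | rfl | h
        · exact (hagree i h).le
        · exact hj.le
        · exact (hzero i h).trans (Nat.zero_le _)
      exact (degree_lt_degree hle fun h => hj.ne (DFunLike.congr_fun h j)).ne hdeg
    exact ⟨l, hjl, hvl, Or.inr hnext⟩
  · have hjn : (j : ℕ) + 1 < n := by
      by_contra! h
      exact hnext (expAt_of_le h v)
    refine ⟨⟨j + 1, hjn⟩, Fin.lt_def.mpr (by simp), ?_, Or.inl rfl⟩
    rw [← expAt_val, Fin.val_mk]
    exact Nat.pos_of_ne_zero hnext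

theorem exists_exchange {k : ℕ} {u v : Fin n →₀ ℕ} (hu : u ∈ k • edges n)
    (hv : v ∈ k • edges n) (hlt : toLex v < toLex u) :
    ∃ j, v j < u j ∧ ∃ w ∈ k • edges n, w ≤ v + single j 1 ∧ toLex v < toLex w := by
  rw [mem_nsmul_edges_iff] at hu hv
  obtain ⟨j, hagree, hj⟩ := Finsupp.Lex.lt_iff.mp hlt
  simp only [ofLex_toLex] at hagree hj
  obtain ⟨l, hjl, hvl, hl⟩ := exists_shift_source (hv.1.trans hu.1.symm) hagree hj
  have hlv : single l 1 ≤ v := single_le_iff.mpr hvl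
  set w := v - single l 1 + single j 1
  have hw (c : ℕ) : expAt c w + (if (l : ℕ) = c then 1 else 0) =
      expAt c v + (if (j : ℕ) = c then 1 else 0) := by
    rw [← expAt_single, ← expAt_single, ← map_add, ← map_add, add_right_comm,
      tsub_add_cancel_of_le hlv]
  have hwdeg : w.degree = 2 * k := by
    have hvdeg := congrArg degree (tsub_add_cancel_of_le hlv)
    simp only [w, map_add, degree_single] at hvdeg ⊢
    omega
  have hagree' : ∀ c < (j : ℕ), expAt c v = expAt c u := fun c hc => by
    have hvu := hagree ⟨c, hc.trans j.isLt⟩ hc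
    rwa [← expAt_val, ← expAt_val] at hvu
  have hwin := window_le_of_shift hu.2 hv.2 hagree' (by rwa [expAt_val, expAt_val])
    (Fin.lt_def.mp hjl) hl hw
  have hwv : ∀ i ≤ j, w i = v i + (if j = i then 1 else 0) := fun i hi => by
    simp [w, single_apply, (hi.trans_lt hjl).ne']
  refine ⟨j, hj, w, mem_nsmul_edges_iff.mpr ⟨hwdeg, hwin⟩, add_le_add tsub_le_self le_rfl,
    Finsupp.Lex.lt_iff.mpr ⟨j, fun i hi => ?_, ?_⟩⟩
  · simp [hwv i hi.le, hi.ne']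
  · simp [hwv j le_rfl]

end Antipath

theorem antipathIdeal_eq_span_edges (K : Type*) [Field K] (n : ℕ) :
    antipathIdeal K n = Ideal.span ((fun d => monomial d (1 : K)) '' Antipath.edges n) := by
  unfold antipathIdeal
  congr 1
  ext p
  simp only [Antipath.edges, Set.mem_image]
  constructor
  · rintro ⟨i, j, hij, rfl⟩
    exact ⟨_, ⟨i, j, hij, rfl⟩, by rw [X, X, monomial_mul, one_mul]⟩
  · rintro ⟨_, ⟨i, j, hij, rfl⟩, rfl⟩
    exact ⟨i, j, hij, by rw [X, X, monomial_mul, one_mul]⟩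

theorem isMinGen_antipathIdeal_pow_iff (K : Type*) [Field K] (n k : ℕ) (d : Fin n →₀ ℕ) :
    IsMinGen (antipathIdeal K n ^ k) d ↔ d ∈ k • Antipath.edges n := by
  rw [antipathIdeal_eq_span_edges, span_monomial_image_pow]
  exact isMinGen_span_monomial_image_iff
    (isAntichain_of_degree_eq fun _ ha => (Antipath.degree_window_of_mem_nsmul ha).1)

theorem antipath_power_linearQuotients_general (K : Type*) [Field K] (n k : ℕ)
    (L : List (Fin n →₀ ℕ))
    (hsort : L.Pairwise fun d d' => toLex d' < toLex d)
    (hmem : ∀ d, d ∈ L ↔ IsMinGen (antipathIdeal K n ^ k) d) :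
    ∀ (t : ℕ) (ht : t < L.length), 0 < t →
      ∃ S : Set (Fin n),
        (Ideal.span { m | ∃ d ∈ L.take t, m = monomial d (1 : K) }).colon
            (Ideal.span {monomial (L.get ⟨t, ht⟩) (1 : K)}) =
          Ideal.span (MvPolynomial.X '' S) := by
  intro t ht _
  have hL (d) : d ∈ L ↔ d ∈ k • Antipath.edges n :=
    (hmem d).trans (isMinGen_antipathIdeal_pow_iff K n k d)
  have htake (d) : d ∈ L.take t ↔ d ∈ L ∧ toLex L[t] < toLex d :=
    List.mem_take_iff_lt_of_pairwise toLex hsort ht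
  have hgens : { m | ∃ d ∈ L.take t, m = monomial d (1 : K) } =
      (fun d => monomial d (1 : K)) '' { d | d ∈ L.take t } := by
    ext
    simp [eq_comm]
  rw [hgens, List.get_eq_getElem]
  refine ⟨_, colon_span_monomial_image_eq_span_X fun d hd => ?_⟩
  obtain ⟨hdL, hlt⟩ := (htake d).mp hd
  obtain ⟨j, hj, w, hw, hwle, hltw⟩ :=
    Antipath.exists_exchange ((hL d).mp hdL) ((hL _).mp (L.getElem_mem ht)) hlt
  exact ⟨j, hj, w, (htake w).mpr ⟨(hL w).mpr hw, hltw⟩, hwle⟩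

/-- For all `n ≥ 1` and `k ≥ 1`, listing the minimal monomial generators of
`I(P_n^c)^k` in decreasing lexicographic order (variable order `x_1 > x_2 > ⋯ > x_n`) is a
linear quotients ordering: each successive colon ideal is generated by a subset of the
variables. -/
theorem antipath_power_linearQuotients (K : Type*) [Field K] (n k : ℕ)
    (hn : 1 ≤ n) (hk : 1 ≤ k)
    (L : List (Fin n →₀ ℕ))
    (hsort : L.Pairwise fun d d' => toLex d' < toLex d)
    (hmem : ∀ d, d ∈ L ↔ IsMinGen (antipathIdeal K n ^ k) d) :
    ∀ (t : ℕ) (ht : t < L.length), 0 < t →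
      ∃ S : Set (Fin n),
        (Ideal.span { m | ∃ d ∈ L.take t, m = monomial d (1 : K) }).colon
            (Ideal.span {monomial (L.get ⟨t, ht⟩) (1 : K)}) =
          Ideal.span (MvPolynomial.X '' S) :=
  antipath_power_linearQuotients_general K n k L hsort hmem
end

section
/- Let m = x_{i_1} ⋯ x_{i_k} x_{j_1} ⋯ x_{j_k} be a monomial with i_1 ≤ ⋯ ≤ i_k ≤ j_1 ≤ ⋯ ≤ j_k and i_r + 2 ≤ j_r for all r, so that m ∈ I(P_n^c)^k. If 1 ≤ i' < i_r for some index r, then the monomial x_{i'} · m / x_{i_r} also belongs to I(P_n^c)^k. -/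
/-! Pair the lower indices with the upper ones position by position: the replacement only
lowers `i r`, so every pair `(update i r i' s, j s)` is still an edge of `P_n^c`, and the
monomial is a product of `k` edge monomials. -/

open MvPolynomial

theorem X_mul_X_mem_antipathIdeal {K : Type*} [Field K] {n : ℕ} {a b : Fin n}
    (hab : (a : ℕ) + 2 ≤ b) : (X a * X b : MvPolynomial (Fin n) K) ∈ antipathIdeal K n :=
  Ideal.subset_span ⟨a, b, hab, rfl⟩

theorem prod_X_mul_prod_X_mem_antipathIdeal_pow {K : Type*} [Field K] {n k : ℕ}
    {a b : Fin k → Fin n} (hab : ∀ s, (a s : ℕ) + 2 ≤ b s) :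
    ((∏ s, X (a s)) * ∏ s, X (b s) : MvPolynomial (Fin n) K) ∈ antipathIdeal K n ^ k := by
  rw [← Finset.prod_mul_distrib]
  simpa only [Finset.prod_const, Finset.card_univ, Fintype.card_fin] using
    Ideal.prod_mem_prod (s := Finset.univ) (I := fun _ => antipathIdeal K n)
      fun s _ => X_mul_X_mem_antipathIdeal (hab s)

theorem antipath_power_replace_lower_general (K : Type*) [Field K] (n k : ℕ)
    (i j : Fin k → Fin n)
    (hadj : ∀ r : Fin k, (i r : ℕ) + 2 ≤ (j r : ℕ))
    (r : Fin k) (i' : Fin n) (hi' : i' < i r) :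
    ((∏ s, X (Function.update i r i' s)) * ∏ s, X (j s) : MvPolynomial (Fin n) K) ∈
      antipathIdeal K n ^ k := by
  refine prod_X_mul_prod_X_mem_antipathIdeal_pow fun s => ?_
  rcases eq_or_ne s r with rfl | hs
  · have hlt : (i' : ℕ) < i s := hi'
    have hedge := hadj s
    rw [Function.update_self]
    omega
  · rw [Function.update_of_ne hs]
    exact hadj s

/-- If `m = x_{i_1} ⋯ x_{i_k} x_{j_1} ⋯ x_{j_k} ∈ I(P_n^c)^k` with
`i_1 ≤ ⋯ ≤ i_k ≤ j_1 ≤ ⋯ ≤ j_k` and `i_r + 2 ≤ j_r` for all `r`, and `i' < i_r` for some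
index `r`, then `x_{i'} · m / x_{i_r}` (i.e. `m` with the factor `x_{i_r}` replaced by
`x_{i'}`) also belongs to `I(P_n^c)^k`. -/
theorem antipath_power_replace_lower (K : Type*) [Field K] (n k : ℕ)
    (i j : Fin k → Fin n) (hi : Monotone i) (hj : Monotone j)
    (hij : ∀ r s : Fin k, i r ≤ j s)
    (hadj : ∀ r : Fin k, (i r : ℕ) + 2 ≤ (j r : ℕ))
    (r : Fin k) (i' : Fin n) (hi' : i' < i r) :
    ((∏ s, X (Function.update i r i' s)) * ∏ s, X (j s) : MvPolynomial (Fin n) K) ∈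
      antipathIdeal K n ^ k :=
  antipath_power_replace_lower_general K n k i j hadj r i' hi'
end

section
/- Let n ≥ 2 and let G be the anticycle on the n+3 vertices x, z_1, z_2, y_1,…,y_n, with J = I(H) the edge ideal of the induced antipath H = G \ {x}. For each 1 ≤ i ≤ n, the colon ideal ( J^2 + (x z_1 z_2 y_l : 1 ≤ l < i) ) : (x z_1 z_2 y_i) is generated by a subset of the variables of R; explicitly, it equals (y_2,…,y_n, z_2) when i = 1, it equals (z_1, z_2, y_1,…,y_n) when 1 < i < n, and it equals (y_1,…,y_{n−1}, z_1) when i = n. -/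
open MvPolynomial

/-! The anticycle `G` on the `n+3` vertices `x, z₁, y₁, …, y_n, z₂`, realized on `Fin (n+3)`
with the cycle labeling `x = 0`, `z₁ = 1`, `y_i = i+1` (so `y_i` has index `i+2` for the
0-indexed `i : Fin n`), `z₂ = n+2`.  The non-edges of `G` are exactly the consecutive pairs
on the cycle `x ∼ z₁ ∼ y₁ ∼ ⋯ ∼ y_n ∼ z₂ ∼ x`. -/

/-- The vertex `x`. -/
def vx (n : ℕ) : Fin (n + 3) := ⟨0, by omega⟩
/-- The vertex `z₁`. -/
def vz1 (n : ℕ) : Fin (n + 3) := ⟨1, by omega⟩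
/-- The vertex `z₂`. -/
def vz2 (n : ℕ) : Fin (n + 3) := ⟨n + 2, by omega⟩
/-- The vertex `y_i` (0-indexed: `vy n i` is `y_{i+1}` of the paper). -/
def vy (n : ℕ) (i : Fin n) : Fin (n + 3) := ⟨(i : ℕ) + 2, by omega⟩

/-- The edge ideal `J = I(H)` of the induced antipath `H = G \ {x}` on the vertices
`z₁, y₁, …, y_n, z₂` (indices `1, …, n+2`): its edges are the pairs of non-consecutive
indices among `1, …, n+2`. -/
noncomputable def Jideal (K : Type*) [Field K] (n : ℕ) :
    Ideal (MvPolynomial (Fin (n + 3)) K) :=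
  Ideal.span { m | ∃ a b : Fin (n + 3),
    1 ≤ (a : ℕ) ∧ (a : ℕ) + 2 ≤ (b : ℕ) ∧ m = X a * X b }

/-! Both `I = J² + (x z₁ z₂ y_l : l < i)` and `m = x z₁ z₂ y_i` are monomial, so `f ∈ I : m`
iff for every monomial `u` of `f` some generator of `I` divides `u m`.
If `y_i ≠ y_1`, then `X_v m = x (v z₂)(z₁ y_i) ∈ J²` for every vertex `v` other than `x, y_n, z₂`;
if `y_i ≠ y_n`, then `X_v m = x (z₁ v)(y_i z₂) ∈ J²` for every `v` other than `x, z₁, y_1`.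
Let `S` be the set of these `v`. If `u` has no variable in `S`, no generator divides `u m`: a
product of two edges of `H` has more factors in `S` than `m` has, and `x z₁ z₂ y_l` with `l < i`
contains `y_l ∈ S`, which does not divide `m`. -/

namespace Finsupp

lemma sum_single_one_apply {σ : Type*} [DecidableEq σ] (s : Finset σ) (a : σ) :
    ∑ v ∈ s, (single a 1 : σ →₀ ℕ) v = if a ∈ s then 1 else 0 := by
  simp [single_apply]

end Finsupp

namespace MvPolynomial

variable {σ R : Type*} [CommSemiring R]

lemma X_mul_X_eq_monomial_s8 (a b : σ) :
    (X a * X b : MvPolynomial σ R) = monomial (Finsupp.single a 1 + Finsupp.single b 1) 1 := by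
  simp only [X, monomial_mul, mul_one]

theorem colon_span_monomial_le_span_X {I : Ideal (MvPolynomial σ R)} {T : Set (σ →₀ ℕ)}
    {d : σ →₀ ℕ} {S : Set σ} (hI : I ≤ Ideal.span ((monomial · (1 : R)) '' T))
    (hT : ∀ g ∈ T, ∃ v ∈ S, d v < g v) :
    I.colon (Ideal.span {monomial d (1 : R)} : Set (MvPolynomial σ R)) ≤
      Ideal.span (X '' S) := by
  intro f hf
  rw [Ideal.mem_colon_span_singleton] at hf
  rw [mem_ideal_span_X_image]
  intro u hu
  obtain ⟨g, hgT, hgu⟩ := mem_ideal_span_monomial_image.mp (hI hf) (u + d) (by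
    rwa [mem_support_iff, coeff_mul_monomial, mul_one, ← mem_support_iff])
  obtain ⟨v, hvS, hdg⟩ := hT g hgT
  refine ⟨v, hvS, fun hu0 => ?_⟩
  have := hgu v
  simp only [Finsupp.coe_add, Pi.add_apply, hu0, zero_add] at this
  omega

end MvPolynomial

namespace Anticycle

open Finsupp Pointwise

variable {K : Type*} [Field K] {n : ℕ}

@[simp] lemma vx_val : (vx n : ℕ) = 0 := rfl
@[simp] lemma vz1_val : (vz1 n : ℕ) = 1 := rfl
@[simp] lemma vz2_val : (vz2 n : ℕ) = n + 2 := rfl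
@[simp] lemma vy_val (i : Fin n) : (vy n i : ℕ) = i + 2 := rfl

lemma eq_vx_or_vz1_or_vz2_or_vy (v : Fin (n + 3)) :
    v = vx n ∨ v = vz1 n ∨ v = vz2 n ∨ ∃ l, v = vy n l := by
  simp only [Fin.ext_iff, vx_val, vz1_val, vz2_val, vy_val]
  by_cases h : 2 ≤ (v : ℕ) ∧ (v : ℕ) < n + 2
  · exact Or.inr <| Or.inr <| Or.inr ⟨⟨v - 2, by omega⟩, by simp only; omega⟩
  · omega

def edgeExponents (n : ℕ) : Set (Fin (n + 3) →₀ ℕ) :=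
  {g | ∃ a b : Fin (n + 3), 1 ≤ (a : ℕ) ∧ (a : ℕ) + 2 ≤ (b : ℕ) ∧ g = single a 1 + single b 1}

lemma Jideal_eq_span_monomial :
    Jideal K n = Ideal.span ((monomial · (1 : K)) '' edgeExponents n) := by
  rw [Jideal]
  congr 1
  ext m
  constructor
  · rintro ⟨a, b, ha, hab, rfl⟩
    exact ⟨_, ⟨a, b, ha, hab, rfl⟩, (X_mul_X_eq_monomial_s8 a b).symm⟩
  · rintro ⟨_, ⟨a, b, ha, hab, rfl⟩, rfl⟩
    exact ⟨a, b, ha, hab, (X_mul_X_eq_monomial_s8 a b).symm⟩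

noncomputable def xzzyExponent (n : ℕ) (i : Fin n) : Fin (n + 3) →₀ ℕ :=
  single (vx n) 1 + single (vz1 n) 1 + single (vz2 n) 1 + single (vy n i) 1

lemma monomial_xzzyExponent (i : Fin n) :
    (monomial (xzzyExponent n i) 1 : MvPolynomial (Fin (n + 3)) K) =
      X (vx n) * X (vz1 n) * X (vz2 n) * X (vy n i) := by
  simp only [xzzyExponent, X, monomial_mul, mul_one]

/-- The set `S` of the header: `z₁, y_1, …, y_{n-1}` when `y_i ≠ y_1`, and `y_2, …, y_n, z₂`
when `y_i ≠ y_n`. -/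
def colonVertices (n : ℕ) (i : Fin n) : Finset (Fin (n + 3)) :=
  {v | (0 < (i : ℕ) ∧ 1 ≤ (v : ℕ) ∧ (v : ℕ) ≤ n) ∨ ((i : ℕ) + 2 ≤ n ∧ 3 ≤ (v : ℕ))}

@[simp] lemma mem_colonVertices {i : Fin n} {v : Fin (n + 3)} :
    v ∈ colonVertices n i ↔
      (0 < (i : ℕ) ∧ 1 ≤ (v : ℕ) ∧ (v : ℕ) ≤ n) ∨ ((i : ℕ) + 2 ≤ n ∧ 3 ≤ (v : ℕ)) := by
  simp [colonVertices]

lemma sum_xzzyExponent_lt_sum_of_mem_edgeExponents_add (hn : 2 ≤ n) (i : Fin n)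
    {g : Fin (n + 3) →₀ ℕ} (hg : g ∈ edgeExponents n + edgeExponents n) :
    ∑ v ∈ colonVertices n i, xzzyExponent n i v < ∑ v ∈ colonVertices n i, g v := by
  obtain ⟨_, ⟨a, b, ha, hab, rfl⟩, _, ⟨c, e, hc, hce, rfl⟩, rfl⟩ := hg
  simp only [xzzyExponent, Finsupp.coe_add, Pi.add_apply, Finset.sum_add_distrib,
    sum_single_one_apply, mem_colonVertices, vx_val, vz1_val, vz2_val, vy_val]
  have := i.isLt
  have := b.isLt
  have := e.isLt
  split_ifs <;> omega

lemma xzzyExponent_apply_vy_lt {i l : Fin n} (hl : l < i) :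
    xzzyExponent n i (vy n l) < xzzyExponent n l (vy n l) := by
  simp only [xzzyExponent, Finsupp.coe_add, Pi.add_apply, single_apply, Fin.ext_iff, vx_val,
    vz1_val, vz2_val, vy_val]
  have := Fin.lt_def.mp hl
  split_ifs <;> omega

lemma colon_le_span_X_colonVertices (hn : 2 ≤ n) (i : Fin n) :
    (Jideal K n ^ 2 + Ideal.span { m | ∃ l : Fin n, l < i ∧
        m = X (vx n) * X (vz1 n) * X (vz2 n) * X (vy n l) }).colon
      ((Ideal.span {X (vx n) * X (vz1 n) * X (vz2 n) * X (vy n i)} :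
        Ideal (MvPolynomial (Fin (n + 3)) K)) : Set (MvPolynomial (Fin (n + 3)) K)) ≤
    Ideal.span (X '' ↑(colonVertices n i)) := by
  rw [← monomial_xzzyExponent]
  refine colon_span_monomial_le_span_X
    (T := edgeExponents n + edgeExponents n ∪ xzzyExponent n '' {l | l < i}) ?_ ?_
  · rw [Jideal_eq_span_monomial, pow_two, Ideal.span_mul_span', Submodule.add_eq_sup, sup_le_iff]
    constructor
    · apply Ideal.span_mono
      rintro _ ⟨_, ⟨g, hg, rfl⟩, _, ⟨h, hh, rfl⟩, rfl⟩
      exact ⟨g + h, Or.inl (Set.add_mem_add hg hh), by simp only [monomial_mul, mul_one]⟩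
    · rw [Ideal.span_le]
      rintro _ ⟨l, hl, rfl⟩
      exact Ideal.subset_span ⟨xzzyExponent n l, Or.inr ⟨l, hl, rfl⟩, monomial_xzzyExponent l⟩
  · rintro g (hg | ⟨l, hl, rfl⟩)
    · exact Finset.exists_lt_of_sum_lt
        (sum_xzzyExponent_lt_sum_of_mem_edgeExponents_add hn i hg)
    · refine ⟨vy n l, ?_, xzzyExponent_apply_vy_lt hl⟩
      have := Fin.lt_def.mp hl
      simp only [Finset.mem_coe, mem_colonVertices, vy_val]
      omega

lemma X_mul_xzzy_mem_Jideal_sq {i : Fin n} {v : Fin (n + 3)} (hv : v ∈ colonVertices n i) :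
    (X v * (X (vx n) * X (vz1 n) * X (vz2 n) * X (vy n i)) : MvPolynomial (Fin (n + 3)) K) ∈
      Jideal K n ^ 2 := by
  have edge : ∀ a b : Fin (n + 3), 1 ≤ (a : ℕ) → (a : ℕ) + 2 ≤ b →
      (X a * X b : MvPolynomial (Fin (n + 3)) K) ∈ Jideal K n :=
    fun a b ha hab => Ideal.subset_span ⟨a, b, ha, hab, rfl⟩
  rw [mem_colonVertices] at hv
  rw [pow_two]
  rcases hv with ⟨hi, hv1, hvn⟩ | ⟨hi, hv⟩
  · rw [show (X v * (X (vx n) * X (vz1 n) * X (vz2 n) * X (vy n i)) :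
        MvPolynomial (Fin (n + 3)) K) =
        X (vx n) * ((X v * X (vz2 n)) * (X (vz1 n) * X (vy n i))) by ring]
    exact Ideal.mul_mem_left _ _ <| Ideal.mul_mem_mul
      (edge _ _ hv1 (by simp only [vz2_val]; omega))
      (edge _ _ le_rfl (by simp only [vz1_val, vy_val]; omega))
  · rw [show (X v * (X (vx n) * X (vz1 n) * X (vz2 n) * X (vy n i)) :
        MvPolynomial (Fin (n + 3)) K) =
        X (vx n) * ((X (vz1 n) * X v) * (X (vy n i) * X (vz2 n))) by ring]
    exact Ideal.mul_mem_left _ _ <| Ideal.mul_mem_mul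
      (edge _ _ le_rfl (by simp only [vz1_val]; omega))
      (edge _ _ (by simp only [vy_val]; omega) (by simp only [vy_val, vz2_val]; omega))

lemma colon_eq_span_X_colonVertices (hn : 2 ≤ n) (i : Fin n) :
    (Jideal K n ^ 2 + Ideal.span { m | ∃ l : Fin n, l < i ∧
        m = X (vx n) * X (vz1 n) * X (vz2 n) * X (vy n l) }).colon
      ((Ideal.span {X (vx n) * X (vz1 n) * X (vz2 n) * X (vy n i)} :
        Ideal (MvPolynomial (Fin (n + 3)) K)) : Set (MvPolynomial (Fin (n + 3)) K)) =
    Ideal.span (X '' ↑(colonVertices n i)) := by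
  refine le_antisymm (colon_le_span_X_colonVertices hn i) ?_
  rw [Ideal.span_le]
  rintro _ ⟨v, hv, rfl⟩
  exact Ideal.mem_colon_span_singleton.mpr (Ideal.mem_sup_left (X_mul_xzzy_mem_Jideal_sq hv))

lemma image_X_colonVertices_of_eq_zero (hn : 2 ≤ n) {i : Fin n} (hi : (i : ℕ) = 0) :
    (X '' ↑(colonVertices n i) : Set (MvPolynomial (Fin (n + 3)) K)) =
      {X (vz2 n)} ∪ { m | ∃ l : Fin n, 0 < (l : ℕ) ∧ m = X (vy n l) } := by
  ext m
  constructor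
  · rintro ⟨v, hv, rfl⟩
    rw [Finset.mem_coe, mem_colonVertices] at hv
    obtain rfl | rfl | rfl | ⟨l, rfl⟩ := eq_vx_or_vz1_or_vz2_or_vy v <;>
      simp only [vx_val, vz1_val, vz2_val, vy_val] at hv
    · omega
    · omega
    · exact Or.inl rfl
    · exact Or.inr ⟨l, by omega, rfl⟩
  · rintro (rfl | ⟨l, hl, rfl⟩) <;> refine ⟨_, ?_, rfl⟩ <;>
      simp only [Finset.mem_coe, mem_colonVertices, vz2_val, vy_val] <;> omega

lemma image_X_colonVertices_of_pos_of_lt {i : Fin n}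
    (hi : 0 < (i : ℕ) ∧ (i : ℕ) < n - 1) :
    (X '' ↑(colonVertices n i) : Set (MvPolynomial (Fin (n + 3)) K)) =
      {X (vz1 n), X (vz2 n)} ∪ Set.range fun l : Fin n => X (vy n l) := by
  ext m
  constructor
  · rintro ⟨v, hv, rfl⟩
    rw [Finset.mem_coe, mem_colonVertices] at hv
    obtain rfl | rfl | rfl | ⟨l, rfl⟩ := eq_vx_or_vz1_or_vz2_or_vy v
    · simp only [vx_val] at hv
      omega
    · exact Or.inl (Or.inl rfl)
    · exact Or.inl (Or.inr rfl)
    · exact Or.inr ⟨l, rfl⟩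
  · rintro ((rfl | rfl) | ⟨l, rfl⟩) <;> refine ⟨_, ?_, rfl⟩ <;>
      simp only [Finset.mem_coe, mem_colonVertices, vz1_val, vz2_val, vy_val] <;> omega

lemma image_X_colonVertices_of_eq_sub_one (hn : 2 ≤ n) {i : Fin n} (hi : (i : ℕ) = n - 1) :
    (X '' ↑(colonVertices n i) : Set (MvPolynomial (Fin (n + 3)) K)) =
      {X (vz1 n)} ∪ { m | ∃ l : Fin n, (l : ℕ) < n - 1 ∧ m = X (vy n l) } := by
  ext m
  constructor
  · rintro ⟨v, hv, rfl⟩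
    rw [Finset.mem_coe, mem_colonVertices] at hv
    obtain rfl | rfl | rfl | ⟨l, rfl⟩ := eq_vx_or_vz1_or_vz2_or_vy v <;>
      simp only [vx_val, vz1_val, vz2_val, vy_val] at hv
    · omega
    · exact Or.inl rfl
    · omega
    · exact Or.inr ⟨l, by omega, rfl⟩
  · rintro (rfl | ⟨l, hl, rfl⟩) <;> refine ⟨_, ?_, rfl⟩ <;>
      simp only [Finset.mem_coe, mem_colonVertices, vz1_val, vy_val] <;> omega

end Anticycle

/-- For each `1 ≤ i ≤ n`, the colon ideal
`(J² + (x z₁ z₂ y_l : l < i)) : (x z₁ z₂ y_i)` is generated by a subset of the variables;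
explicitly it is `(y₂,…,y_n,z₂)` for `i = 1`, `(z₁,z₂,y₁,…,y_n)` for `1 < i < n`, and
`(y₁,…,y_{n-1},z₁)` for `i = n`.  (Here `i : Fin n` is 0-indexed: `i = 0` is the paper's
`i = 1` and `i = n - 1` is the paper's `i = n`.) -/
theorem stage2a_colon (K : Type*) [Field K] (n : ℕ) (hn : 2 ≤ n) (i : Fin n) :
    ∀ Q : Ideal (MvPolynomial (Fin (n + 3)) K),
      Q = (Jideal K n ^ 2 +
            Ideal.span { m | ∃ l : Fin n, l < i ∧
              m = X (vx n) * X (vz1 n) * X (vz2 n) * X (vy n l) }).colon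
          ((Ideal.span {X (vx n) * X (vz1 n) * X (vz2 n) * X (vy n i)} :
              Ideal (MvPolynomial (Fin (n + 3)) K)) : Set (MvPolynomial (Fin (n + 3)) K)) →
      (∃ S : Set (Fin (n + 3)), Q = Ideal.span (MvPolynomial.X '' S)) ∧
      ((i : ℕ) = 0 →
        Q = Ideal.span ({X (vz2 n)} ∪
              { m | ∃ l : Fin n, 0 < (l : ℕ) ∧ m = X (vy n l) })) ∧
      (0 < (i : ℕ) ∧ (i : ℕ) < n - 1 →
        Q = Ideal.span ({X (vz1 n), X (vz2 n)} ∪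
              Set.range fun l : Fin n => X (vy n l))) ∧
      ((i : ℕ) = n - 1 →
        Q = Ideal.span ({X (vz1 n)} ∪
              { m | ∃ l : Fin n, (l : ℕ) < n - 1 ∧ m = X (vy n l) })) := by
  rintro Q rfl
  rw [Anticycle.colon_eq_span_X_colonVertices hn i]
  exact ⟨⟨_, rfl⟩,
    fun hi => by rw [Anticycle.image_X_colonVertices_of_eq_zero hn hi],
    fun hi => by rw [Anticycle.image_X_colonVertices_of_pos_of_lt hi],
    fun hi => by rw [Anticycle.image_X_colonVertices_of_eq_sub_one hn hi]⟩
end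

section
/- Let n ≥ 2 and let G be the anticycle on the n+3 vertices x, z_1, z_2, y_1,…,y_n, with J = I(H) the edge ideal of the induced antipath H = G \ {x}. Fix 1 ≤ i ≤ j ≤ n with (i,j) ≠ (1,1), and let I' = J^2 + (x z_1 z_2 y_l : 1 ≤ l ≤ n) + ( x y_k y_l z_2 : 1 ≤ k ≤ l ≤ n, (k,l) ≠ (n,n) ) + ( x y_{i'} y_{j'} z_1 : 1 ≤ i' ≤ j' ≤ n, (i',j') ≠ (1,1), (j',i') strictly dictionary-greater than (j,i) ). Then the colon ideal I' : (x y_i y_j z_1) is generated by a subset of the variables of R. -/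
/-!
The colon of a monomial ideal by a monomial `x^μ` is spanned by the monomials `x^(g - μ)⁺`, `x^g`
running over the generators. It is therefore generated by a set `S` of variables as soon as every
generator exceeds `x^μ` in some variable of `S` and `x_v x^μ` lies in the ideal for each `v ∈ S`.
For `x^μ = x y_i y_j z₁`, `S` consists of `z₂`, of `z₁` if `i > 1`, and of the `y_l` with `l > i`
or `l ≤ j - 2` (except `y_1` when `i = 1`). Both conditions are checked generator by generator;
only for `J²` is a pigeonhole argument needed.
-/

open MvPolynomial

open Finsupp (single)

theorem colon_span_monomial_eq_span_X {σ R : Type*} [CommSemiring R] {A : Set (σ →₀ ℕ)}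
    {μ : σ →₀ ℕ} {S : Set σ} (hA : ∀ g ∈ A, ∃ v ∈ S, μ v < g v)
    (hS : ∀ v ∈ S, ∃ g ∈ A, g ≤ μ + single v 1) :
    (Ideal.span ((fun s => monomial s (1 : R)) '' A)).colon
        (Ideal.span {monomial μ (1 : R)} : Set (MvPolynomial σ R)) =
      Ideal.span (X '' S) := by
  ext p
  rw [Ideal.mem_colon_span_singleton, mem_ideal_span_monomial_image, mem_ideal_span_X_image]
  constructor
  · intro h e he
    have hcoeff : coeff (e + μ) (p * monomial μ 1) = coeff e p := by
      rw [coeff_mul_monomial, mul_one]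
    obtain ⟨g, hgA, hge⟩ := h (e + μ) (by rwa [mem_support_iff, hcoeff, ← mem_support_iff])
    obtain ⟨v, hvS, hlt⟩ := hA g hgA
    refine ⟨v, hvS, ?_⟩
    have := hge v
    simp only [Finsupp.coe_add, Pi.add_apply] at this
    omega
  · intro h e he
    rw [mem_support_iff, coeff_mul_monomial'] at he
    split_ifs at he with hμe
    · obtain ⟨v, hvS, hv⟩ := h (e - μ) (mem_support_iff.mpr (by rwa [mul_one] at he))
      obtain ⟨g, hgA, hgle⟩ := hS v hvS
      refine ⟨g, hgA, hgle.trans fun w => ?_⟩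
      have := hμe w
      simp only [Finsupp.coe_add, Pi.add_apply, Finsupp.coe_tsub, Pi.sub_apply] at hv this ⊢
      rcases eq_or_ne v w with rfl | hvw
      · rw [Finsupp.single_eq_same]; omega
      · rw [Finsupp.single_eq_of_ne' hvw]; omega
    · exact absurd rfl he

noncomputable def monExp {σ : Type*} (a b c d : σ) : σ →₀ ℕ :=
  single a 1 + single b 1 + single c 1 + single d 1

theorem X_mul_X_mul_X_mul_X {σ R : Type*} [CommSemiring R] (a b c d : σ) :
    (X a * X b * X c * X d : MvPolynomial σ R) = monomial (monExp a b c d) 1 := by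
  simp only [X, monomial_mul, mul_one, monExp]

section
variable {σ : Type*} {a b c d v : σ}

theorem monExp_apply_eq_zero (ha : v ≠ a) (hb : v ≠ b) (hc : v ≠ c) (hd : v ≠ d) :
    monExp a b c d v = 0 := by
  simp [monExp, ha.symm, hb.symm, hc.symm, hd.symm]

theorem one_le_monExp_apply (h : v = a ∨ v = b ∨ v = c ∨ v = d) : 1 ≤ monExp a b c d v := by
  rcases h with rfl | rfl | rfl | rfl <;>
    simp only [monExp, Finsupp.add_apply, Finsupp.single_eq_same] <;> omega

theorem two_le_monExp_apply (hab : v = a ∨ v = b) (hcd : v = c ∨ v = d) :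
    2 ≤ monExp a b c d v := by
  have h1 : 1 ≤ (single a 1 + single b 1 : σ →₀ ℕ) v := by rcases hab with rfl | rfl <;> simp
  have h2 : 1 ≤ (single c 1 + single d 1 : σ →₀ ℕ) v := by rcases hcd with rfl | rfl <;> simp
  simp only [monExp, Finsupp.add_apply] at h1 h2 ⊢
  omega

end

noncomputable def idealExps (n : ℕ) (i j : Fin n) : Set (Fin (n + 3) →₀ ℕ) :=
  {g | ∃ a b c d : Fin (n + 3), 1 ≤ (a : ℕ) ∧ (a : ℕ) + 2 ≤ b ∧ 1 ≤ (c : ℕ) ∧ (c : ℕ) + 2 ≤ d ∧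
      g = monExp a b c d} ∪
    {g | ∃ l : Fin n, g = monExp (vx n) (vz1 n) (vz2 n) (vy n l)} ∪
    {g | ∃ k l : Fin n, k ≤ l ∧ ¬((k : ℕ) = n - 1 ∧ (l : ℕ) = n - 1) ∧
      g = monExp (vx n) (vy n k) (vy n l) (vz2 n)} ∪
    {g | ∃ i' j' : Fin n, i' ≤ j' ∧ ¬((i' : ℕ) = 0 ∧ (j' : ℕ) = 0) ∧
      (j < j' ∨ (j' = j ∧ i < i')) ∧ g = monExp (vx n) (vy n i') (vy n j') (vz1 n)}

theorem ideal_eq_span_idealExps (K : Type*) [Field K] (n : ℕ) (i j : Fin n) :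
    Jideal K n ^ 2 +
          Ideal.span { m | ∃ l : Fin n,
            m = X (vx n) * X (vz1 n) * X (vz2 n) * X (vy n l) } +
          Ideal.span { m | ∃ k l : Fin n, k ≤ l ∧
            ¬((k : ℕ) = n - 1 ∧ (l : ℕ) = n - 1) ∧
            m = X (vx n) * X (vy n k) * X (vy n l) * X (vz2 n) } +
          Ideal.span { m | ∃ i' j' : Fin n, i' ≤ j' ∧
            ¬((i' : ℕ) = 0 ∧ (j' : ℕ) = 0) ∧
            (j < j' ∨ (j' = j ∧ i < i')) ∧
            m = X (vx n) * X (vy n i') * X (vy n j') * X (vz1 n) } =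
      Ideal.span ((fun g => monomial g (1 : K)) '' idealExps n i j) := by
  simp only [Jideal, pow_two, Ideal.span_mul_span', Ideal.add_eq_sup, ← Ideal.span_union,
    idealExps, Set.image_union]
  congr 1
  ext q
  simp only [Set.mem_union, Set.mem_ofPred_eq, Set.mem_image, Set.mem_mul]
  simp [X_mul_X_mul_X_mul_X, ← mul_assoc, @eq_comm _ q, and_assoc]

def colonVars (n : ℕ) (i j : Fin n) : Set (Fin (n + 3)) :=
  {v | v = vz2 n ∨ (v = vz1 n ∧ 0 < (i : ℕ)) ∨
    ∃ l : Fin n, v = vy n l ∧ (i < l ∨ ((l : ℕ) + 2 ≤ j ∧ (l = i → 0 < (i : ℕ))))}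

noncomputable def colonExp (n : ℕ) (i j : Fin n) : Fin (n + 3) →₀ ℕ :=
  monExp (vx n) (vy n i) (vy n j) (vz1 n)

section
variable {n : ℕ} {i j : Fin n}

theorem colonExp_apply_le_one {v : Fin (n + 3)} (h : ¬(v = vy n i ∧ v = vy n j)) :
    colonExp n i j v ≤ 1 := by
  simp only [colonExp, monExp, Finsupp.add_apply, Finsupp.single_apply, Fin.ext_iff,
    vx, vz1, vy] at h ⊢
  split_ifs <;> omega

theorem mem_colonVars_iff_val {v : Fin (n + 3)} :
    v ∈ colonVars n i j ↔ (v : ℕ) = n + 2 ∨ ((v : ℕ) = 1 ∧ 0 < (i : ℕ)) ∨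
      (2 ≤ (v : ℕ) ∧ (v : ℕ) ≤ n + 1 ∧
        ((i : ℕ) + 2 < v ∨ ((v : ℕ) ≤ j ∧ ((v : ℕ) = i + 2 → 0 < (i : ℕ))))) := by
  constructor
  · rintro (rfl | ⟨rfl, hi⟩ | ⟨l, rfl, hl⟩)
    · simp [vz2]
    · simp [vz1, hi]
    · simp only [vy, Fin.lt_def, Fin.ext_iff] at hl ⊢
      omega
  · rintro (hv | ⟨hv, hi⟩ | ⟨hv2, hvn, hv⟩)
    · exact Or.inl (Fin.ext hv)
    · exact Or.inr (Or.inl ⟨Fin.ext hv, hi⟩)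
    · refine Or.inr (Or.inr ⟨⟨v - 2, by omega⟩, Fin.ext (by simp [vy]; omega), ?_⟩)
      simp only [Fin.lt_def, Fin.ext_iff]
      omega

theorem exists_mem_colonVars_lt_of_edges (hij : i ≤ j) {a b c d : Fin (n + 3)}
    (ha : 1 ≤ (a : ℕ)) (hab : (a : ℕ) + 2 ≤ b) (hc : 1 ≤ (c : ℕ)) (hcd : (c : ℕ) + 2 ≤ d) :
    ∃ v ∈ colonVars n i j, colonExp n i j v < monExp a b c d v := by
  -- The vertices `z₁, y₁, …, z₂` outside `colonVars` are at most two consecutive ones, so each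
  -- edge has an endpoint in `colonVars`. Among these endpoints, one lies outside the support of
  -- `x y_i y_j z₁`, or two coincide where that monomial has exponent at most 1.
  have key : ∃ v ∈ ({a, b, c, d} : Set _), v ∈ colonVars n i j ∧
      ((v ≠ vx n ∧ v ≠ vz1 n ∧ v ≠ vy n i ∧ v ≠ vy n j) ∨
        (¬(v = vy n i ∧ v = vy n j) ∧ (v = a ∨ v = b) ∧ (v = c ∨ v = d))) := by
    simp only [Set.exists_mem_insert, Set.mem_singleton_iff, exists_eq_left]
    simp only [mem_colonVars_iff_val, Fin.ext_iff, vx, vz1, vy, ne_eq]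
    grind (splits := 40)
  obtain ⟨v, hv, hvS, hgood⟩ := key
  refine ⟨v, hvS, ?_⟩
  rcases hgood with ⟨hx, hz, hi, hj⟩ | ⟨hij, hab, hcd⟩
  · rw [colonExp, monExp_apply_eq_zero hx hi hj hz]
    exact one_le_monExp_apply hv
  · exact (colonExp_apply_le_one hij).trans_lt (two_le_monExp_apply hab hcd)

theorem exists_mem_colonVars_lt (hij : i ≤ j) :
    ∀ g ∈ idealExps n i j, ∃ v ∈ colonVars n i j, colonExp n i j v < g v := by
  rintro g (((⟨a, b, c, d, ha, hab, hc, hcd, rfl⟩ | ⟨l, rfl⟩) | ⟨k, l, -, -, rfl⟩) |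
    ⟨i', j', hij', -, hlex, rfl⟩)
  · exact exists_mem_colonVars_lt_of_edges hij ha hab hc hcd
  · refine ⟨vz2 n, Or.inl rfl, ?_⟩
    simp only [colonExp, monExp, Finsupp.add_apply, Finsupp.single_apply, Fin.ext_iff,
      vx, vz1, vz2, vy]
    split_ifs <;> omega
  · refine ⟨vz2 n, Or.inl rfl, ?_⟩
    simp only [colonExp, monExp, Finsupp.add_apply, Finsupp.single_apply, Fin.ext_iff,
      vx, vz1, vz2, vy]
    split_ifs <;> omega
  · rcases hlex with hj' | ⟨rfl, hi'⟩
    · refine ⟨vy n j', Or.inr (Or.inr ⟨j', rfl, Or.inl (hij.trans_lt hj')⟩), ?_⟩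
      simp only [colonExp, monExp, Finsupp.add_apply, Finsupp.single_apply, Fin.ext_iff,
        vx, vz1, vy]
      split_ifs <;> omega
    · refine ⟨vy n i', Or.inr (Or.inr ⟨i', rfl, Or.inl hi'⟩), ?_⟩
      simp only [colonExp, monExp, Finsupp.add_apply, Finsupp.single_apply, Fin.ext_iff,
        vx, vz1, vy]
      split_ifs <;> omega

theorem exists_idealExps_le (hij : i ≤ j) :
    ∀ v ∈ colonVars n i j, ∃ g ∈ idealExps n i j, g ≤ colonExp n i j + single v 1 := by
  rw [Fin.le_def] at hij
  rintro v (rfl | ⟨rfl, hi⟩ | ⟨l, rfl, hl⟩)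
  · refine ⟨_, Or.inl (Or.inl (Or.inr ⟨i, rfl⟩)), ?_⟩
    exact le_iff_exists_add.mpr ⟨single (vy n j) 1, by simp only [colonExp, monExp]; abel⟩
  · refine ⟨monExp (vz1 n) (vy n i) (vz1 n) (vy n j),
      Or.inl (Or.inl (Or.inl ⟨_, _, _, _, le_rfl, ?_, le_rfl, ?_, rfl⟩)), ?_⟩
    · simp only [vz1, vy]; omega
    · simp only [vz1, vy]; omega
    · exact le_iff_exists_add.mpr ⟨single (vx n) 1, by simp only [colonExp, monExp]; abel⟩
  · rw [Fin.lt_def, Fin.ext_iff] at hl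
    rcases lt_trichotomy (l : ℕ) i with hli | hli | hil
    · refine ⟨monExp (vz1 n) (vy n i) (vy n l) (vy n j),
        Or.inl (Or.inl (Or.inl ⟨_, _, _, _, le_rfl, ?_, ?_, ?_, rfl⟩)), ?_⟩
      · simp only [vz1, vy]; omega
      · simp only [vy]; omega
      · simp only [vy]; omega
      · exact le_iff_exists_add.mpr ⟨single (vx n) 1, by simp only [colonExp, monExp]; abel⟩
    · obtain rfl : l = i := Fin.ext hli
      refine ⟨monExp (vz1 n) (vy n l) (vy n l) (vy n j),
        Or.inl (Or.inl (Or.inl ⟨_, _, _, _, le_rfl, ?_, ?_, ?_, rfl⟩)), ?_⟩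
      · simp only [vz1, vy]; omega
      · simp only [vy]; omega
      · simp only [vy]; omega
      · exact le_iff_exists_add.mpr ⟨single (vx n) 1, by simp only [colonExp, monExp]; abel⟩
    rcases le_or_gt (l : ℕ) j with hlj | hjl
    · refine ⟨monExp (vx n) (vy n l) (vy n j) (vz1 n),
        Or.inr ⟨l, j, Fin.le_def.mpr hlj, by omega, Or.inr ⟨rfl, Fin.lt_def.mpr hil⟩, rfl⟩, ?_⟩
      exact le_iff_exists_add.mpr ⟨single (vy n i) 1, by simp only [colonExp, monExp]; abel⟩
    · refine ⟨monExp (vx n) (vy n i) (vy n l) (vz1 n),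
        Or.inr ⟨i, l, Fin.le_def.mpr hil.le, by omega, Or.inl (Fin.lt_def.mpr hjl), rfl⟩, ?_⟩
      exact le_iff_exists_add.mpr ⟨single (vy n j) 1, by simp only [colonExp, monExp]; abel⟩

end

theorem stage2c_colon_general (K : Type*) [Field K] (n : ℕ) (i j : Fin n)
    (hij : i ≤ j) :
    ∃ S : Set (Fin (n + 3)),
      ((Jideal K n ^ 2 +
          Ideal.span { m | ∃ l : Fin n,
            m = X (vx n) * X (vz1 n) * X (vz2 n) * X (vy n l) } +
          Ideal.span { m | ∃ k l : Fin n, k ≤ l ∧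
            ¬((k : ℕ) = n - 1 ∧ (l : ℕ) = n - 1) ∧
            m = X (vx n) * X (vy n k) * X (vy n l) * X (vz2 n) } +
          Ideal.span { m | ∃ i' j' : Fin n, i' ≤ j' ∧
            ¬((i' : ℕ) = 0 ∧ (j' : ℕ) = 0) ∧
            (j < j' ∨ (j' = j ∧ i < i')) ∧
            m = X (vx n) * X (vy n i') * X (vy n j') * X (vz1 n) }).colon
        ((Ideal.span {X (vx n) * X (vy n i) * X (vy n j) * X (vz1 n)} :
          Ideal (MvPolynomial (Fin (n + 3)) K)) : Set (MvPolynomial (Fin (n + 3)) K))) =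
      Ideal.span (MvPolynomial.X '' S) := by
  refine ⟨colonVars n i j, ?_⟩
  rw [ideal_eq_span_idealExps, X_mul_X_mul_X_mul_X]
  exact colon_span_monomial_eq_span_X (exists_mem_colonVars_lt hij) (exists_idealExps_le hij)

/-- Fix `1 ≤ i ≤ j ≤ n` with `(i,j) ≠ (1,1)`.  With
`I' = J² + (x z₁ z₂ y_l : 1 ≤ l ≤ n) + (x y_k y_l z₂ : k ≤ l, (k,l) ≠ (n,n)) +
(x y_{i'} y_{j'} z₁ : i' ≤ j', (i',j') ≠ (1,1), (j',i')` dictionary-greater than `(j,i))`,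
the colon ideal `I' : (x y_i y_j z₁)` is generated by a subset of the variables.
(Indices are 0-indexed: the excluded pairs `(1,1)` and `(n,n)` are `(0,0)` and
`(n-1,n-1)`.) -/
theorem stage2c_colon (K : Type*) [Field K] (n : ℕ) (hn : 2 ≤ n) (i j : Fin n)
    (hij : i ≤ j) (h11 : ¬((i : ℕ) = 0 ∧ (j : ℕ) = 0)) :
    ∃ S : Set (Fin (n + 3)),
      ((Jideal K n ^ 2 +
          Ideal.span { m | ∃ l : Fin n,
            m = X (vx n) * X (vz1 n) * X (vz2 n) * X (vy n l) } +
          Ideal.span { m | ∃ k l : Fin n, k ≤ l ∧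
            ¬((k : ℕ) = n - 1 ∧ (l : ℕ) = n - 1) ∧
            m = X (vx n) * X (vy n k) * X (vy n l) * X (vz2 n) } +
          Ideal.span { m | ∃ i' j' : Fin n, i' ≤ j' ∧
            ¬((i' : ℕ) = 0 ∧ (j' : ℕ) = 0) ∧
            (j < j' ∨ (j' = j ∧ i < i')) ∧
            m = X (vx n) * X (vy n i') * X (vy n j') * X (vz1 n) }).colon
        ((Ideal.span {X (vx n) * X (vy n i) * X (vy n j) * X (vz1 n)} :
          Ideal (MvPolynomial (Fin (n + 3)) K)) : Set (MvPolynomial (Fin (n + 3)) K))) =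
      Ideal.span (MvPolynomial.X '' S) :=
  stage2c_colon_general K n i j hij
end

section
/- Let n ≥ 2 and let G be the anticycle on the n+3 vertices x, z_1, z_2, y_1,…,y_n, with J = I(H) the edge ideal of the induced antipath H = G \ {x}. Let I' be the sum of J^2, (x z_1 z_2 y_l : 1 ≤ l ≤ n), ( x y_k y_l z_2 : 1 ≤ k ≤ l ≤ n, (k,l) ≠ (n,n) ), ( x y_k y_l z_1 : 1 ≤ k ≤ l ≤ n, (k,l) ≠ (1,1) ), ( x y_i y_j y_k : 1 ≤ i ≤ j ≤ k ≤ n, i + 2 ≤ k ), and ( x^2 y_k y_l : 1 ≤ k ≤ l ≤ n, (k,l) ≠ (1,1) ). Then the colon ideal I' : (x^2 y_1^2) equals (y_2,…,y_n, z_2); in particular it is generated by variables. -/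
open MvPolynomial

/-!
Every generator of `I'` is divisible by one of `y₂, …, y_n, z₂`, so `I'` lies in the ideal
`P = (y₂, …, y_n, z₂)`. This ideal is prime, being the kernel of the substitution that sends
these variables to `0`, and it does not contain `x² y₁²`; hence `I' : x² y₁² ⊆ P`. Conversely
`z₂ · x² y₁² = x · (x y₁ y₁ z₂)` (a generator since `n ≥ 2`) and
`y_l · x² y₁² = y₁ · (x² y₁ y_l)` for `l ≥ 2` lie in `I'`.
-/

namespace Ideal

theorem colon_span_singleton_eq_of_isPrime {R : Type*} [CommSemiring R] {I P : Ideal R}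
    (hP : P.IsPrime) {m : R} (hIP : I ≤ P) (hm : m ∉ P) (hPm : P ≤ I.colon (span {m})) :
    I.colon (span {m} : Set R) = P :=
  le_antisymm
    (fun _ hf => (hP.mem_or_mem (hIP (mem_colon_span_singleton.1 hf))).resolve_right hm) hPm

end Ideal

namespace MvPolynomial

variable {σ R : Type*} [CommRing R]

section killVars

variable (S : Set σ) [DecidablePred (· ∈ S)]

noncomputable def killVars : MvPolynomial σ R →ₐ[R] MvPolynomial σ R :=
  aeval fun i => if i ∈ S then 0 else X i

variable {S}

@[simp]
theorem killVars_X_of_mem {i : σ} (hi : i ∈ S) : killVars (R := R) S (X i) = 0 := by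
  simp [killVars, hi]

@[simp]
theorem killVars_X_of_notMem {i : σ} (hi : i ∉ S) : killVars (R := R) S (X i) = X i := by
  simp [killVars, hi]

variable (S)

theorem sub_killVars_mem_span_X_image (f : MvPolynomial σ R) :
    f - killVars S f ∈ Ideal.span (X '' S) := by
  induction f using MvPolynomial.induction_on with
  | C a => simp [killVars]
  | add p q hp hq =>
    rw [map_add, add_sub_add_comm]
    exact add_mem hp hq
  | mul_X p i hp =>
    by_cases hi : i ∈ S
    · rw [map_mul, killVars_X_of_mem hi, mul_zero, sub_zero]
      exact Ideal.mul_mem_left _ _ (Ideal.subset_span ⟨i, hi, rfl⟩)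
    · rw [map_mul, killVars_X_of_notMem hi, ← sub_mul]
      exact Ideal.mul_mem_right _ _ hp

theorem ker_killVars : RingHom.ker (killVars (R := R) S) = Ideal.span (X '' S) := by
  apply le_antisymm
  · intro f hf
    simpa [RingHom.mem_ker.1 hf] using sub_killVars_mem_span_X_image S f
  · rw [Ideal.span_le]
    rintro _ ⟨i, hi, rfl⟩
    exact killVars_X_of_mem hi

end killVars

variable [IsDomain R] (S : Set σ)

theorem isPrime_span_X_image : (Ideal.span (X '' S : Set (MvPolynomial σ R))).IsPrime := by
  classical
  rw [← ker_killVars]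
  exact RingHom.ker_isPrime _

theorem X_notMem_span_X_image {i : σ} (hi : i ∉ S) :
    (X i : MvPolynomial σ R) ∉ Ideal.span (X '' S) := by
  classical
  rw [← ker_killVars, RingHom.mem_ker, killVars_X_of_notMem hi]
  exact X_ne_zero i

end MvPolynomial

theorem Fin.val_pos_of_le_of_not_both_zero {n : ℕ} {k l : Fin n} (hkl : k ≤ l)
    (h : ¬((k : ℕ) = 0 ∧ (l : ℕ) = 0)) : 0 < (l : ℕ) := by
  rw [Fin.le_def] at hkl
  omega

section Anticycle

variable (K : Type*) [Field K] {n : ℕ}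

variable (n) in
def highVars : Set (Fin (n + 3)) := {i | 3 ≤ (i : ℕ)}

theorem mem_highVars {i : Fin (n + 3)} : i ∈ highVars n ↔ 3 ≤ (i : ℕ) := Iff.rfl

theorem X_mem_span_X_highVars {i : Fin (n + 3)} (hi : 3 ≤ (i : ℕ)) :
    (X i : MvPolynomial (Fin (n + 3)) K) ∈ Ideal.span (X '' highVars n) :=
  Ideal.subset_span ⟨i, hi, rfl⟩

variable (n) in
/-- The ideal `I'` of the statement. -/
noncomputable def idealIPrime : Ideal (MvPolynomial (Fin (n + 3)) K) :=
  Jideal K n ^ 2 +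
    Ideal.span { m | ∃ l : Fin n,
      m = X (vx n) * X (vz1 n) * X (vz2 n) * X (vy n l) } +
    Ideal.span { m | ∃ k l : Fin n, k ≤ l ∧
      ¬((k : ℕ) = n - 1 ∧ (l : ℕ) = n - 1) ∧
      m = X (vx n) * X (vy n k) * X (vy n l) * X (vz2 n) } +
    Ideal.span { m | ∃ k l : Fin n, k ≤ l ∧
      ¬((k : ℕ) = 0 ∧ (l : ℕ) = 0) ∧
      m = X (vx n) * X (vy n k) * X (vy n l) * X (vz1 n) } +
    Ideal.span { m | ∃ i j k : Fin n, i ≤ j ∧ j ≤ k ∧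
      (i : ℕ) + 2 ≤ (k : ℕ) ∧
      m = X (vx n) * X (vy n i) * X (vy n j) * X (vy n k) } +
    Ideal.span { m | ∃ k l : Fin n, k ≤ l ∧
      ¬((k : ℕ) = 0 ∧ (l : ℕ) = 0) ∧
      m = X (vx n) * X (vx n) * X (vy n k) * X (vy n l) }

theorem X_image_highVars (hn : 0 < n) :
    (X '' highVars n : Set (MvPolynomial (Fin (n + 3)) K)) =
      {X (vz2 n)} ∪ { m | ∃ l : Fin n, 0 < (l : ℕ) ∧ m = X (vy n l) } := by
  ext m
  constructor
  · rintro ⟨i, hi, rfl⟩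
    rw [mem_highVars] at hi
    by_cases hiz : (i : ℕ) = n + 2
    · exact Or.inl (congrArg X (Fin.ext hiz))
    · have hlt := i.isLt
      refine Or.inr ⟨⟨i - 2, by omega⟩, by simp only; omega, congrArg X (Fin.ext ?_)⟩
      simp only [vy]
      omega
  · rintro (rfl | ⟨l, hl, rfl⟩)
    · exact ⟨vz2 n, by simp [mem_highVars, vz2]; omega, rfl⟩
    · exact ⟨vy n l, by simp [mem_highVars, vy]; omega, rfl⟩

theorem x_sq_y₁_sq_notMem_span_X_highVars (hn : 0 < n) :
    X (vx n) * X (vx n) * X (vy n ⟨0, hn⟩) * X (vy n ⟨0, hn⟩) ∉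
      Ideal.span (X '' highVars n : Set (MvPolynomial (Fin (n + 3)) K)) := by
  have hP := isPrime_span_X_image (R := K) (highVars n)
  have hx : vx n ∉ highVars n := by simp [mem_highVars, vx]
  have hy₁ : vy n ⟨0, hn⟩ ∉ highVars n := by simp [mem_highVars, vy]
  exact hP.mul_notMem (hP.mul_notMem (hP.mul_notMem (X_notMem_span_X_image _ hx)
    (X_notMem_span_X_image _ hx)) (X_notMem_span_X_image _ hy₁)) (X_notMem_span_X_image _ hy₁)

theorem idealIPrime_le_span_X_highVars (hn : 0 < n) :
    idealIPrime K n ≤ Ideal.span (X '' highVars n) := by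
  have hz2 := X_mem_span_X_highVars K (i := vz2 n) (by simp [vz2]; omega)
  have hy {l : Fin n} (hl : 0 < (l : ℕ)) :=
    X_mem_span_X_highVars K (i := vy n l) (by simp [vy]; omega)
  have hJ : Jideal K n ≤ Ideal.span (X '' highVars n) := by
    rw [Jideal, Ideal.span_le]
    rintro _ ⟨a, b, ha, hab, rfl⟩
    exact Ideal.mul_mem_left _ _ (X_mem_span_X_highVars K (by omega))
  refine sup_le (sup_le (sup_le (sup_le (sup_le ((Ideal.pow_le_self two_ne_zero).trans hJ)
    ?_) ?_) ?_) ?_) ?_ <;> rw [Ideal.span_le]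
  · rintro _ ⟨l, rfl⟩
    exact Ideal.mul_mem_right _ _ (Ideal.mul_mem_left _ _ hz2)
  · rintro _ ⟨k, l, -, -, rfl⟩
    exact Ideal.mul_mem_left _ _ hz2
  · rintro _ ⟨k, l, hkl, h, rfl⟩
    exact Ideal.mul_mem_right _ _
      (Ideal.mul_mem_left _ _ (hy (Fin.val_pos_of_le_of_not_both_zero hkl h)))
  · rintro _ ⟨i, j, k, -, -, hik, rfl⟩
    exact Ideal.mul_mem_left _ _ (hy (by omega))
  · rintro _ ⟨k, l, hkl, h, rfl⟩
    exact Ideal.mul_mem_left _ _ (hy (Fin.val_pos_of_le_of_not_both_zero hkl h))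

theorem span_X_highVars_le_colon (hn : 2 ≤ n) :
    Ideal.span (X '' highVars n) ≤ (idealIPrime K n).colon
      ((Ideal.span {X (vx n) * X (vx n) * X (vy n ⟨0, zero_lt_two.trans_le hn⟩) *
          X (vy n ⟨0, zero_lt_two.trans_le hn⟩)} :
        Ideal (MvPolynomial (Fin (n + 3)) K)) : Set (MvPolynomial (Fin (n + 3)) K)) := by
  set y₁ : Fin n := ⟨0, zero_lt_two.trans_le hn⟩
  rw [X_image_highVars K y₁.pos, Ideal.span_le]
  rintro _ (rfl | ⟨l, hl, rfl⟩) <;> rw [SetLike.mem_coe, Ideal.mem_colon_span_singleton]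
  · have hgen : X (vx n) * X (vy n y₁) * X (vy n y₁) * X (vz2 n) ∈ idealIPrime K n :=
      Ideal.mem_sup_left <| Ideal.mem_sup_left <| Ideal.mem_sup_left <| Ideal.mem_sup_right <|
        Ideal.subset_span ⟨y₁, y₁, le_rfl, by simp [y₁]; omega, rfl⟩
    convert Ideal.mul_mem_left _ (X (vx n)) hgen using 1
    ring
  · have hgen : X (vx n) * X (vx n) * X (vy n y₁) * X (vy n l) ∈ idealIPrime K n :=
      Ideal.mem_sup_right <| Ideal.subset_span
        ⟨y₁, l, Fin.le_def.2 l.val.zero_le, by simp [y₁]; omega, rfl⟩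
    convert Ideal.mul_mem_left _ (X (vy n y₁)) hgen using 1
    ring

end Anticycle

/-- With
`I' = J² + (x z₁ z₂ y_l : 1 ≤ l ≤ n) + (x y_k y_l z₂ : k ≤ l, (k,l) ≠ (n,n)) +
(x y_k y_l z₁ : k ≤ l, (k,l) ≠ (1,1)) + (x y_i y_j y_k : i ≤ j ≤ k, i + 2 ≤ k) +
(x² y_k y_l : k ≤ l, (k,l) ≠ (1,1))`, the colon ideal `I' : (x² y₁²)` equals
`(y₂, …, y_n, z₂)`; in particular it is generated by variables.
(Indices are 0-indexed: `y₁` is `vy n ⟨0,_⟩` and `y₂, …, y_n` are the `vy n l` with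
`0 < l`.) -/
theorem stage3b_colon (K : Type*) [Field K] (n : ℕ) (hn : 2 ≤ n) :
    ((Jideal K n ^ 2 +
        Ideal.span { m | ∃ l : Fin n,
          m = X (vx n) * X (vz1 n) * X (vz2 n) * X (vy n l) } +
        Ideal.span { m | ∃ k l : Fin n, k ≤ l ∧
          ¬((k : ℕ) = n - 1 ∧ (l : ℕ) = n - 1) ∧
          m = X (vx n) * X (vy n k) * X (vy n l) * X (vz2 n) } +
        Ideal.span { m | ∃ k l : Fin n, k ≤ l ∧
          ¬((k : ℕ) = 0 ∧ (l : ℕ) = 0) ∧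
          m = X (vx n) * X (vy n k) * X (vy n l) * X (vz1 n) } +
        Ideal.span { m | ∃ i j k : Fin n, i ≤ j ∧ j ≤ k ∧
          (i : ℕ) + 2 ≤ (k : ℕ) ∧
          m = X (vx n) * X (vy n i) * X (vy n j) * X (vy n k) } +
        Ideal.span { m | ∃ k l : Fin n, k ≤ l ∧
          ¬((k : ℕ) = 0 ∧ (l : ℕ) = 0) ∧
          m = X (vx n) * X (vx n) * X (vy n k) * X (vy n l) }).colon
      ((Ideal.span {X (vx n) * X (vx n) * X (vy n ⟨0, by omega⟩) * X (vy n ⟨0, by omega⟩)} :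
        Ideal (MvPolynomial (Fin (n + 3)) K)) : Set (MvPolynomial (Fin (n + 3)) K))) =
    Ideal.span ({X (vz2 n)} ∪
      { m : MvPolynomial (Fin (n + 3)) K | ∃ l : Fin n, 0 < (l : ℕ) ∧ m = X (vy n l) }) := by
  rw [← X_image_highVars K (by omega)]
  exact Ideal.colon_span_singleton_eq_of_isPrime (isPrime_span_X_image _)
    (idealIPrime_le_span_X_highVars K (by omega))
    (x_sq_y₁_sq_notMem_span_X_highVars K (by omega)) (span_X_highVars_le_colon K hn)
end

section
/- Let n ≥ 2 and let G be the anticycle on the n+3 vertices x, z_1, z_2, y_1,…,y_n. For 1 ≤ i ≤ j ≤ k ≤ n, the monomial x y_i y_j y_k belongs to I(G)^2 if and only if i + 2 ≤ k. -/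
open MvPolynomial

/-- Adjacency in the anticycle (complement of the `N`-cycle) on `Fin N`:
two distinct vertices are adjacent iff they are not consecutive on the cycle (mod `N`). -/
def anticycleAdj (N : ℕ) (a b : Fin N) : Prop :=
  a ≠ b ∧ ((a : ℕ) + 1) % N ≠ (b : ℕ) ∧ ((b : ℕ) + 1) % N ≠ (a : ℕ)

/-- The edge ideal `I(G)` of the anticycle on `Fin N`. -/
noncomputable def anticycleIdeal (K : Type*) [Field K] (N : ℕ) :
    Ideal (MvPolynomial (Fin N) K) :=
  Ideal.span { m | ∃ a b : Fin N, anticycleAdj N a b ∧ m = X a * X b }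

/-! `I(G)²` is the monomial ideal generated by the products of two edges, so the monomial
`x y_i y_j y_k` lies in it iff it is divisible by such a product. As `x` occurs only once, one of
the two edges avoids `x` and joins two of `y_i, y_j, y_k`; two `y`'s are adjacent exactly when
their indices differ by at least `2`, which is possible iff `i + 2 ≤ k`. Conversely, for
`i + 2 ≤ k` the product `(x y_j) (y_i y_k)` is the monomial itself. -/

open scoped Pointwise

namespace MvPolynomial

variable {σ R : Type*} [CommSemiring R]

theorem span_monomial_image_mul (S T : Set (σ →₀ ℕ)) :
    Ideal.span ((fun s => monomial s (1 : R)) '' S) * Ideal.span ((fun s => monomial s 1) '' T) =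
      Ideal.span ((fun s => monomial s 1) '' (S + T)) := by
  rw [Ideal.span_mul_span', ← Set.image2_add, ← Set.image2_mul, Set.image_image2_distrib]
  intro a b
  rw [monomial_mul, one_mul]

theorem monomial_one_mem_span_monomial_image [Nontrivial R] {d : σ →₀ ℕ} {S : Set (σ →₀ ℕ)} :
    monomial d (1 : R) ∈ Ideal.span ((fun s => monomial s (1 : R)) '' S) ↔ ∃ s ∈ S, s ≤ d := by
  classical
  rw [mem_ideal_span_monomial_image, support_monomial, if_neg one_ne_zero]
  simp

end MvPolynomial

namespace Finsupp

variable {σ : Type*}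

theorem le_or_le_of_add_le_single_one_add {e₁ e₂ f : σ →₀ ℕ} {x : σ} (hf : f x = 0)
    (h : e₁ + e₂ ≤ single x 1 + f) : e₁ ≤ f ∨ e₂ ≤ f := by
  have hx := h x
  simp only [coe_add, Pi.add_apply, single_eq_same, hf] at hx
  have key : ∀ e : σ →₀ ℕ, e ≤ single x 1 + f → e x = 0 → e ≤ f := by
    intro e he he0 v
    by_cases hv : v = x
    · simp [hv, he0]
    · simpa [single_eq_of_ne hv] using he v
  rcases Nat.le_one_iff_eq_zero_or_eq_one.mp (le_trans le_self_add hx) with h0 | h1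
  · exact .inl (key e₁ (le_trans le_self_add h) h0)
  · exact .inr (key e₂ (le_trans le_add_self h) (by omega))

theorem eq_or_eq_or_eq_of_single_one_le {a u v w : σ}
    (h : single a 1 ≤ single u 1 + single v 1 + single w 1) : a = u ∨ a = v ∨ a = w := by
  by_contra! hne
  have := single_le_iff.mp h
  simp [single_eq_of_ne hne.1, single_eq_of_ne hne.2.1, single_eq_of_ne hne.2.2] at this

end Finsupp

open Finsupp

section Anticycle

variable {n : ℕ}

theorem vx_ne_vy (p : Fin n) : vx n ≠ vy n p := by
  simp [vx, vy, Fin.ext_iff]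

theorem anticycleAdj_vx_vy (p : Fin n) : anticycleAdj (n + 3) (vx n) (vy n p) := by
  have := p.isLt
  simp only [anticycleAdj, vx, vy, ne_eq, Fin.ext_iff]
  rw [Nat.mod_eq_of_lt (by omega), Nat.mod_eq_of_lt (by omega)]
  omega

theorem anticycleAdj_vy_vy_iff {p q : Fin n} :
    anticycleAdj (n + 3) (vy n p) (vy n q) ↔ (p : ℕ) + 2 ≤ q ∨ (q : ℕ) + 2 ≤ p := by
  have := p.isLt
  have := q.isLt
  simp only [anticycleAdj, vy, ne_eq, Fin.ext_iff]
  rw [Nat.mod_eq_of_lt (by omega), Nat.mod_eq_of_lt (by omega)]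
  omega

def anticycleEdgeExponents (N : ℕ) : Set (Fin N →₀ ℕ) :=
  {e | ∃ a b : Fin N, anticycleAdj N a b ∧ e = single a 1 + single b 1}

theorem anticycleIdeal_eq_span_monomial (K : Type*) [Field K] (N : ℕ) :
    anticycleIdeal K N =
      Ideal.span ((fun s => monomial s (1 : K)) '' anticycleEdgeExponents N) := by
  rw [anticycleIdeal]
  congr 1
  ext m
  simp [anticycleEdgeExponents, X, monomial_mul, eq_comm]

theorem anticycleIdeal_sq (K : Type*) [Field K] (N : ℕ) :
    anticycleIdeal K N ^ 2 = Ideal.span ((fun s => monomial s (1 : K)) ''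
      (anticycleEdgeExponents N + anticycleEdgeExponents N)) := by
  rw [sq, anticycleIdeal_eq_span_monomial, span_monomial_image_mul]

theorem add_two_le_of_anticycleAdj {i j k : Fin n} (hij : i ≤ j) (hjk : j ≤ k) {a b : Fin (n + 3)}
    (hab : anticycleAdj (n + 3) a b)
    (h : single a 1 + single b 1 ≤ single (vy n i) 1 + single (vy n j) 1 + single (vy n k) 1) :
    (i : ℕ) + 2 ≤ k := by
  rw [Fin.le_def] at hij hjk
  obtain rfl | rfl | rfl := eq_or_eq_or_eq_of_single_one_le (le_self_add.trans h) <;>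
  obtain rfl | rfl | rfl := eq_or_eq_or_eq_of_single_one_le (le_add_self.trans h) <;>
  rw [anticycleAdj_vy_vy_iff] at hab <;> omega

end Anticycle

theorem mem_anticycle_sq_iff_general (K : Type*) [Field K] (n : ℕ) (i j k : Fin n)
    (hij : i ≤ j) (hjk : j ≤ k) :
    ((X (vx n) * X (vy n i) * X (vy n j) * X (vy n k) : MvPolynomial (Fin (n + 3)) K) ∈
      anticycleIdeal K (n + 3) ^ 2) ↔ (i : ℕ) + 2 ≤ (k : ℕ) := by
  set Y := single (vy n i) 1 + single (vy n j) 1 + single (vy n k) 1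
  have hmono : (X (vx n) * X (vy n i) * X (vy n j) * X (vy n k) : MvPolynomial (Fin (n + 3)) K)
      = monomial (single (vx n) 1 + Y) 1 := by
    simp only [X, monomial_mul, one_mul, Y, add_assoc]
  have hY : Y (vx n) = 0 := by
    simp [Y, single_eq_of_ne, vx_ne_vy]
  rw [hmono, anticycleIdeal_sq, monomial_one_mem_span_monomial_image]
  constructor
  · rintro ⟨_, ⟨e₁, ⟨a, b, hab, rfl⟩, e₂, ⟨c, d, hcd, rfl⟩, rfl⟩, hle⟩
    rcases le_or_le_of_add_le_single_one_add hY hle with h | h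
    · exact add_two_le_of_anticycleAdj hij hjk hab h
    · exact add_two_le_of_anticycleAdj hij hjk hcd h
  · intro hik
    refine ⟨_, ⟨_, ⟨vx n, vy n j, anticycleAdj_vx_vy j, rfl⟩,
      _, ⟨vy n i, vy n k, anticycleAdj_vy_vy_iff.2 (.inl hik), rfl⟩, rfl⟩, le_of_eq ?_⟩
    simp only [Y]
    abel

/-- For `1 ≤ i ≤ j ≤ k ≤ n`, the monomial `x y_i y_j y_k` belongs to
`I(G)²` if and only if `i + 2 ≤ k`.  (Indices are 0-indexed.) -/
theorem mem_anticycle_sq_iff (K : Type*) [Field K] (n : ℕ) (hn : 2 ≤ n) (i j k : Fin n)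
    (hij : i ≤ j) (hjk : j ≤ k) :
    ((X (vx n) * X (vy n i) * X (vy n j) * X (vy n k) : MvPolynomial (Fin (n + 3)) K) ∈
      anticycleIdeal K (n + 3) ^ 2) ↔ (i : ℕ) + 2 ≤ (k : ℕ) :=
  mem_anticycle_sq_iff_general K n i j k hij hjk
end

section
/- In k[x_1,…,x_6], the colon ideal ( x_1^2 x_3^2, x_1^2 x_3 x_4, x_1 x_2 x_3 x_4, x_1^2 x_4^2, x_1 x_2 x_4^2, x_2^2 x_4^2, x_1^2 x_3 x_5, x_1 x_2 x_3 x_5, x_1 x_3^2 x_5, x_1^2 x_4 x_5, x_1 x_2 x_4 x_5, x_2^2 x_4 x_5, x_1 x_3 x_4 x_5, x_2 x_3 x_4 x_5, x_1^2 x_5^2, x_1 x_2 x_5^2, x_2^2 x_5^2, x_1 x_3 x_5^2, x_2 x_3 x_5^2, x_3^2 x_5^2 ) : (x_1 x_2 x_3 x_6) equals (x_4, x_5, x_1 x_3). In particular, this colon ideal is not generated by variables, so listing the minimal monomial generators of I(A_6)^2 in decreasing reverse-lexicographic order fails to be a linear quotients ordering at the twenty-first generator x_1 x_2 x_3 x_6.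 -/
/-!
The colon of a monomial ideal `(m₁, …, m_r)` by a monomial `m` is generated by the quotients
`mᵢ / gcd(mᵢ, m)`, whose exponent vectors are the truncated differences `aᵢ - e`. For the twenty
generators and `m = x₁x₂x₃x₆` every quotient is divisible by `x₄`, `x₅` or `x₁x₃`, and all three
occur among the quotients. In an ideal generated by variables, every monomial of the ideal is
divisible by a variable of the ideal; but `x₁x₃` lies in `(x₄, x₅, x₁x₃)` while neither `x₁`
nor `x₃` does.
-/

open MvPolynomial Finsupp

namespace MvPolynomial

variable {σ : Type*} (R : Type*) [CommSemiring R]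

noncomputable def monomialIdeal (A : Set (σ →₀ ℕ)) : Ideal (MvPolynomial σ R) :=
  Ideal.span ((fun s => monomial s 1) '' A)

variable {R}

theorem support_mul_monomial_one (p : MvPolynomial σ R) (s : σ →₀ ℕ) :
    (p * monomial s 1).support = p.support.map (addRightEmbedding s) :=
  AddMonoidAlgebra.support_coeff_mul_single p _ (by simp) _

theorem monomial_mem_monomialIdeal [Nontrivial R] {a : σ →₀ ℕ} {B : Set (σ →₀ ℕ)} :
    monomial a (1 : R) ∈ monomialIdeal R B ↔ ∃ b ∈ B, b ≤ a := by
  classical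
  rw [monomialIdeal, mem_ideal_span_monomial_image, support_monomial, if_neg one_ne_zero]
  simp

theorem monomialIdeal_le_monomialIdeal_iff [Nontrivial R] {A B : Set (σ →₀ ℕ)} :
    monomialIdeal R A ≤ monomialIdeal R B ↔ ∀ a ∈ A, ∃ b ∈ B, b ≤ a :=
  Ideal.span_le.trans <| Set.image_subset_iff.trans <|
    forall₂_congr fun _ _ => monomial_mem_monomialIdeal

theorem monomialIdeal_colon (A : Set (σ →₀ ℕ)) (e : σ →₀ ℕ) :
    (monomialIdeal R A).colon {monomial e 1} = monomialIdeal R ((· - e) '' A) := by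
  ext f
  simp only [Submodule.mem_colon_singleton, smul_eq_mul, monomialIdeal,
    mem_ideal_span_monomial_image, support_mul_monomial_one, Finset.forall_mem_map,
    Set.exists_mem_image, addRightEmbedding_apply, tsub_le_iff_right]

theorem monomialIdeal_ne_span_X_image [Nontrivial R] {B : Set (σ →₀ ℕ)} {a : σ →₀ ℕ} (ha : a ∈ B)
    (h : ∀ i, a i ≠ 0 → ∀ b ∈ B, ¬ b ≤ Finsupp.single i 1) (S : Set σ) :
    monomialIdeal R B ≠ Ideal.span (X '' S) := by
  intro hB
  have haS : monomial a (1 : R) ∈ Ideal.span (X '' S) :=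
    hB ▸ Ideal.subset_span ⟨a, ha, rfl⟩
  obtain ⟨i, hiS, hai⟩ := mem_ideal_span_X_image.mp haS a
    (by classical rw [support_monomial, if_neg one_ne_zero]; exact Finset.mem_singleton_self a)
  have hiB : monomial (Finsupp.single i 1) (1 : R) ∈ monomialIdeal R B :=
    hB ▸ Ideal.subset_span ⟨i, hiS, rfl⟩
  obtain ⟨b, hb, hbi⟩ := monomial_mem_monomialIdeal.mp hiB
  exact h i hai b hb hbi

theorem monomial_equivFunOnFinite_symm [Fintype σ] (v : σ → ℕ) :
    monomial (equivFunOnFinite.symm v) (1 : R) = ∏ i, X i ^ v i := by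
  rw [monomial_eq, C_1, one_mul, Finsupp.prod_fintype _ _ (fun _ => pow_zero _)]
  rfl

theorem monomialIdeal_equivFunOnFinite_symm_image [Fintype σ] (A : Set (σ → ℕ)) :
    monomialIdeal R (equivFunOnFinite.symm '' A) =
      Ideal.span ((fun v => ∏ i, X i ^ v i) '' A) := by
  rw [monomialIdeal, Set.image_image]
  simp_rw [monomial_equivFunOnFinite_symm]

theorem monomialIdeal_equivFunOnFinite_symm_image_le_iff [Finite σ] [Nontrivial R]
    {A B : Set (σ → ℕ)} :
    monomialIdeal R (equivFunOnFinite.symm '' A) ≤ monomialIdeal R (equivFunOnFinite.symm '' B) ↔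
      ∀ a ∈ A, ∃ b ∈ B, b ≤ a := by
  simp only [monomialIdeal_le_monomialIdeal_iff, Set.forall_mem_image, Set.exists_mem_image]
  rfl

theorem monomialIdeal_equivFunOnFinite_symm_image_colon [Finite σ] (A : Set (σ → ℕ))
    (e : σ → ℕ) :
    (monomialIdeal R (equivFunOnFinite.symm '' A)).colon {monomial (equivFunOnFinite.symm e) 1} =
      monomialIdeal R (equivFunOnFinite.symm '' ((· - e) '' A)) := by
  rw [monomialIdeal_colon, Set.image_image, Set.image_image]
  congr 2
  funext a
  exact Finsupp.ext fun _ => rfl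

end MvPolynomial

-- Exponent vectors in `Fin 6 → ℕ`, so that the finite checks below are decidable;
-- coordinate `i` is the exponent of `X i`, i.e. of the paper's `x_{i+1}`.
def revlexPrefix : Finset (Fin 6 → ℕ) :=
  {![2, 0, 2, 0, 0, 0], ![2, 0, 1, 1, 0, 0], ![1, 1, 1, 1, 0, 0], ![2, 0, 0, 2, 0, 0],
    ![1, 1, 0, 2, 0, 0], ![0, 2, 0, 2, 0, 0], ![2, 0, 1, 0, 1, 0], ![1, 1, 1, 0, 1, 0],
    ![1, 0, 2, 0, 1, 0], ![2, 0, 0, 1, 1, 0], ![1, 1, 0, 1, 1, 0], ![0, 2, 0, 1, 1, 0],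
    ![1, 0, 1, 1, 1, 0], ![0, 1, 1, 1, 1, 0], ![2, 0, 0, 0, 2, 0], ![1, 1, 0, 0, 2, 0],
    ![0, 2, 0, 0, 2, 0], ![1, 0, 1, 0, 2, 0], ![0, 1, 1, 0, 2, 0], ![0, 0, 2, 0, 2, 0]}

def revlexNext : Fin 6 → ℕ := ![1, 1, 1, 0, 0, 1]

def colonGenerators : Finset (Fin 6 → ℕ) :=
  {![0, 0, 0, 1, 0, 0], ![0, 0, 0, 0, 1, 0], ![1, 0, 1, 0, 0, 0]}

section

variable {R : Type*} [CommSemiring R] [Nontrivial R]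

theorem monomialIdeal_revlexPrefix_colon :
    (monomialIdeal R (equivFunOnFinite.symm '' revlexPrefix)).colon
        {monomial (equivFunOnFinite.symm revlexNext) 1} =
      monomialIdeal R (equivFunOnFinite.symm '' colonGenerators) := by
  have hquot : (∀ a ∈ revlexPrefix, ∃ b ∈ colonGenerators, b ≤ a - revlexNext) ∧
      ∀ b ∈ colonGenerators, ∃ a ∈ revlexPrefix, a - revlexNext ≤ b := by
    simp only [Pi.le_def]
    decide
  rw [monomialIdeal_equivFunOnFinite_symm_image_colon]
  apply le_antisymm <;> rw [monomialIdeal_equivFunOnFinite_symm_image_le_iff]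
  · simpa only [Set.forall_mem_image, Finset.mem_coe] using hquot.1
  · simpa only [Set.exists_mem_image, Finset.mem_coe] using hquot.2

theorem monomialIdeal_colonGenerators_ne_span_X_image (S : Set (Fin 6)) :
    monomialIdeal R (equivFunOnFinite.symm '' colonGenerators) ≠ Ideal.span (X '' S) := by
  have hindiv : ∀ i, ![1, 0, 1, 0, 0, 0] i ≠ 0 →
      ∀ b ∈ colonGenerators, ¬ b ≤ Pi.single i 1 := by
    simp only [Pi.le_def]
    decide
  refine monomialIdeal_ne_span_X_image (a := equivFunOnFinite.symm ![1, 0, 1, 0, 0, 0])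
    (Set.mem_image_of_mem _ (Finset.mem_coe.2 (by decide))) ?_ S
  rintro i hi _ ⟨b, hb, rfl⟩
  rw [← equivFunOnFinite_symm_single]
  exact hindiv i hi b hb

end

/-- In `k[x₁,…,x₆]` (variables `X 0, …, X 5`), the colon ideal of the
first twenty generators of `I(A₆)²` in decreasing reverse-lexicographic order by the
twenty-first generator `x₁x₂x₃x₆` equals `(x₄, x₅, x₁x₃)`; in particular it is not
generated by variables, so the decreasing reverse-lexicographic order fails to be a linear
quotients ordering at `x₁x₂x₃x₆`. -/
theorem revlex_fails_linear_quotients (K : Type*) [Field K] :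
    ∀ Q : Ideal (MvPolynomial (Fin 6) K),
      Q = (Ideal.span
            {(X 0 ^ 2 * X 2 ^ 2 : MvPolynomial (Fin 6) K),
              X 0 ^ 2 * X 2 * X 3, X 0 * X 1 * X 2 * X 3,
              X 0 ^ 2 * X 3 ^ 2, X 0 * X 1 * X 3 ^ 2, X 1 ^ 2 * X 3 ^ 2,
              X 0 ^ 2 * X 2 * X 4, X 0 * X 1 * X 2 * X 4, X 0 * X 2 ^ 2 * X 4,
              X 0 ^ 2 * X 3 * X 4, X 0 * X 1 * X 3 * X 4, X 1 ^ 2 * X 3 * X 4,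
              X 0 * X 2 * X 3 * X 4, X 1 * X 2 * X 3 * X 4,
              X 0 ^ 2 * X 4 ^ 2, X 0 * X 1 * X 4 ^ 2, X 1 ^ 2 * X 4 ^ 2,
              X 0 * X 2 * X 4 ^ 2, X 1 * X 2 * X 4 ^ 2, X 2 ^ 2 * X 4 ^ 2}).colon
          ((Ideal.span {X 0 * X 1 * X 2 * X 5} : Ideal (MvPolynomial (Fin 6) K)) :
            Set (MvPolynomial (Fin 6) K)) →
      Q = Ideal.span {(X 3 : MvPolynomial (Fin 6) K), X 4, X 0 * X 2} ∧
      ¬∃ S : Set (Fin 6), Q = Ideal.span (MvPolynomial.X '' S) := by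
  intro Q hQ
  replace hQ : Q = (monomialIdeal K (equivFunOnFinite.symm '' revlexPrefix)).colon
      {monomial (equivFunOnFinite.symm revlexNext) 1} := by
    rw [hQ, Ideal.colon_span, monomialIdeal_equivFunOnFinite_symm_image,
      monomial_equivFunOnFinite_symm]
    simp [revlexPrefix, revlexNext, Fin.prod_univ_six, Set.image_insert_eq]
  rw [monomialIdeal_revlexPrefix_colon] at hQ
  refine ⟨hQ.trans ?_, fun ⟨S, hS⟩ => monomialIdeal_colonGenerators_ne_span_X_image S (hQ ▸ hS)⟩
  rw [monomialIdeal_equivFunOnFinite_symm_image]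
  simp [colonGenerators, Fin.prod_univ_six, Set.image_insert_eq]
end
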